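/- arXiv:1402.5391 — 3 statements merged into one kernel-verified Lean document; each statement's English description precedes it below -/
import Mathlib

section
/- Lower envelope of the infimum chain (Lemma 6.4): let m ≤ M in X, i ∈ {1,…,I}, 1 ≤ j ≤ C_i, and set m' = F_inf([m, M], r_j^i) = componentwise minimum of {f_inf(x, r_j^i) : m ≤ x ≤ M}. Then for every p ∈ {1,…,I}: m'_p = m_p if p < i; m'_i = m_i − 1{j ≤ m_i}; and m'_p = m_p − 1{m_p > 0 and j ≤ min(Σ_{i'=i+1}^{p−1} M_{i'} + m_p, M_i)} if p > i. -/
open MeasureTheory Finset ENNReal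

namespace ATO

/-- Events: joint arrivals `d A` for subsets `A`, and joint-return services `s i j = r_j^i`. -/
inductive Ev (I : ℕ) where
  | d : Finset (Fin I) → Ev I
  | s : Fin I → ℕ → Ev I

instance (I : ℕ) : MeasurableSpace (Ev I) := ⊤

/-- Valid events: arrivals for nonempty `A`, services `r_j^i` with `1 ≤ j ≤ C i`. -/
def ValidEv {I : ℕ} (C : Fin I → ℕ) : Ev I → Prop
  | .d A => A.Nonempty
  | .s i j => 1 ≤ j ∧ j ≤ C i

/-- The detailed state space `N`: coordinates indexed by the nonempty subsets `A`
(the `∅` coordinate is forced to `0`), with `∑_{A ∋ i} n_A ≤ C_i` for every `i`. -/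
def Nspace {I : ℕ} (C : Fin I → ℕ) : Set (Finset (Fin I) → ℕ) :=
  {n | n ∅ = 0 ∧ ∀ i, (∑ A ∈ Finset.univ.filter (fun A => i ∈ A), n A) ≤ C i}

/-- The projection `ψ : N → X`, `ψ(n)_i = ∑_{A ∋ i} n_A`. -/
def psi {I : ℕ} (n : Finset (Fin I) → ℕ) : Fin I → ℕ :=
  fun i => ∑ A ∈ Finset.univ.filter (fun A => i ∈ A), n A

/-- The projected state space `X = {0,…,C 1} × ⋯ × {0,…,C I}`. -/
def Xspace {I : ℕ} (C : Fin I → ℕ) : Set (Fin I → ℕ) := {x | ∀ i, x i ≤ C i}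

/-- The enumeration `A_k^i` of the subsets of `{i,…,I}` containing `i` (0-based indices):
an element `t > i` belongs to `A_k^i` iff the binary digit of `k` in position `I - 1 - t`
vanishes. -/
def Aset {I : ℕ} (i : Fin I) (k : ℕ) : Finset (Fin I) :=
  Finset.univ.filter (fun t => t = i ∨ (i < t ∧ Nat.testBit k (I - 1 - t.val) = false))

/-- Partial sums `∑_{ℓ=0}^{k-1} n_{A_ℓ^i}`. -/
def psum {I : ℕ} (i : Fin I) (n : Finset (Fin I) → ℕ) (k : ℕ) : ℕ :=
  ∑ l ∈ Finset.range k, n (Aset i l)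

/-- The transition function `f̃` of the detailed chain: a demand `d A` adds `ε_{A^{(n)}}`
where `A^{(n)} = {i ∈ A : ψ(n)_i < C_i}` (no change if `A^{(n)} = ∅`); a service `r_j^i`
removes `ε_{A_k^i}` for the minimal `k` with `∑_{ℓ=0}^{k} n_{A_ℓ^i} ≥ j`, if
`∑_{ℓ} n_{A_ℓ^i} ≥ j`, and otherwise does nothing. -/
noncomputable def ftil {I : ℕ} (C : Fin I → ℕ) (n : Finset (Fin I) → ℕ) :
    Ev I → (Finset (Fin I) → ℕ)
  | .d A => fun B =>
      n B + if B = A.filter (fun i => psi n i < C i) ∧ B.Nonempty then 1 else 0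
  | .s i j => fun B =>
      n B - if j ≤ psum i n (2 ^ (I - 1 - i.val))
              ∧ B = Aset i (sInf {k | j ≤ psum i n (k + 1)}) then 1 else 0

/-- The supremum chain `f̄` on `X` (componentwise supremum over all detailed states
projecting to `x`). -/
noncomputable def fbar {I : ℕ} (C : Fin I → ℕ) (x : Fin I → ℕ) (a : Ev I) : Fin I → ℕ :=
  fun p => sSup ((fun n => psi (ftil C n a) p) '' {n | n ∈ Nspace C ∧ psi n = x})

/-- The infimum chain `f_inf` on `X` (componentwise infimum over all detailed states
projecting to `x`). -/
noncomputable def finf {I : ℕ} (C : Fin I → ℕ) (x : Fin I → ℕ) (a : Ev I) : Fin I → ℕ :=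
  fun p => sInf ((fun n => psi (ftil C n a) p) '' {n | n ∈ Nspace C ∧ psi n = x})

/-- One step of the aggregated envelope chain `F([m,M],a)`. -/
noncomputable def Fenv {I : ℕ} (C : Fin I → ℕ) (m M : Fin I → ℕ) (a : Ev I) :
    (Fin I → ℕ) × (Fin I → ℕ) :=
  (fun p => sInf ((fun x => finf C x a p) '' Set.Icc m M),
   fun p => sSup ((fun x => fbar C x a p) '' Set.Icc m M))

/-- Iteration of the aggregated envelope chain along a word (head applied first). -/
noncomputable def FenvIter {I : ℕ} (C : Fin I → ℕ) :
    (Fin I → ℕ) → (Fin I → ℕ) → List (Ev I) → (Fin I → ℕ) × (Fin I → ℕ)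
  | m, M, [] => (m, M)
  | m, M, a :: w => FenvIter C (Fenv C m M a).1 (Fenv C m M a).2 w

/-- Iterated application of a transition function along a word (head applied first). -/
def iter {I : ℕ} {σ : Type*} (f : σ → Ev I → σ) : σ → List (Ev I) → σ
  | x, [] => x
  | x, a :: w => iter f (f x a) w

/-- The backward word `u_t u_{t-1} ⋯ u_1` (with `u_t` applied first). -/
def bword {I : ℕ} (ω : ℕ → Ev I) (t : ℕ) : List (Ev I) :=
  ((List.range t).reverse).map fun s => ω (s + 1)

/-- The forward word `u_1 u_2 ⋯ u_t` (with `u_1` applied first). -/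
def fword {I : ℕ} (ω : ℕ → Ev I) (t : ℕ) : List (Ev I) :=
  (List.range t).map fun s => ω (s + 1)

/-- The "hat" operation `x̂_i = max{x_i − (x_1 + ⋯ + x_{i-1}), 0}`. -/
def xhat {I : ℕ} (x : Fin I → ℕ) (i : Fin I) : ℕ :=
  x i - ∑ t ∈ Finset.univ.filter (fun t => t < i), x t

/-- The distribution `ν` on events: `ν (d A) = λ_A / Λ` and `ν (r_j^i) = μ / Λ`. -/
noncomputable def probJ {I : ℕ} (C : Fin I → ℕ) (lam : Finset (Fin I) → ℝ) (μv Λ : ℝ) :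
    Ev I → ℝ≥0∞
  | .d A => if A.Nonempty then ENNReal.ofReal (lam A / Λ) else 0
  | .s i j => if 1 ≤ j ∧ j ≤ C i then ENNReal.ofReal (μv / Λ) else 0

section lem64aux
variable {I : ℕ}

lemma mem_Aset {i t : Fin I} {k : ℕ} :
    t ∈ Aset i k ↔ (t = i ∨ (i < t ∧ Nat.testBit k (I - 1 - t.val) = false)) := by
  simp [Aset]

lemma self_mem_Aset (i : Fin I) (k : ℕ) : i ∈ Aset i k := mem_Aset.mpr (Or.inl rfl)

lemma testBit_key {m q r : ℕ} (hq : q < m) :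
    Nat.testBit (2 ^ m - 1 - 2 ^ q) r = (decide (r < m) && !decide (q = r)) := by
  have h2 : (2:ℕ) ^ q < 2 ^ m := Nat.pow_lt_pow_right one_lt_two hq
  have h : 2 ^ m - 1 - 2 ^ q = 2 ^ m - (2 ^ q + 1) := by omega
  rw [h, Nat.testBit_two_pow_sub_succ h2, Nat.testBit_two_pow]

/-- index of the pair `{i,t}` (or of `{i}` when `t = i`...) -/
def kp (i t : Fin I) : ℕ := 2 ^ (I - 1 - i.val) - 1 - 2 ^ (I - 1 - t.val)

lemma Aset_kp {i t : Fin I} (h : i < t) : Aset i (kp i t) = {i, t} := by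
  have hti : t.val < I := t.isLt
  have hit : i.val < t.val := h
  have hq : I - 1 - t.val < I - 1 - i.val := by omega
  ext q
  have hqI : q.val < I := q.isLt
  rw [mem_Aset, Finset.mem_insert, Finset.mem_singleton]
  unfold kp
  rw [testBit_key hq]
  constructor
  · rintro (rfl | ⟨hiq, hb⟩)
    · exact Or.inl rfl
    · right
      have hiq' : i.val < q.val := hiq
      have hd : I - 1 - q.val < I - 1 - i.val := by omega
      simp only [decide_eq_true (by omega : I - 1 - q.val < I - 1 - i.val), Bool.true_and,
        Bool.not_eq_false', decide_eq_true_eq] at hb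
      have : q = t := by
        apply Fin.ext; omega
      exact this
  · rintro (rfl | rfl)
    · exact Or.inl rfl
    · refine Or.inr ⟨h, ?_⟩
      simp

lemma Aset_top (i : Fin I) : Aset i (2 ^ (I - 1 - i.val) - 1) = {i} := by
  ext q
  have hqI : q.val < I := q.isLt
  rw [mem_Aset, Finset.mem_singleton, Nat.testBit_two_pow_sub_one]
  constructor
  · rintro (rfl | ⟨hiq, hb⟩)
    · rfl
    · have hiq' : i.val < q.val := hiq
      simp only [decide_eq_false_iff_not] at hb
      omega
  · rintro rfl; exact Or.inl rfl

lemma Aset_inj {i : Fin I} {k l : ℕ} (hk : k < 2 ^ (I - 1 - i.val))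
    (hl : l < 2 ^ (I - 1 - i.val)) (h : Aset i k = Aset i l) : k = l := by
  apply Nat.eq_of_testBit_eq; intro r
  rcases lt_or_ge r (I - 1 - i.val) with hr | hr
  · have hiI : i.val < I := i.isLt
    set t : Fin I := ⟨I - 1 - r, by omega⟩ with ht
    have hit : i < t := by
      have : i.val < I - 1 - r := by omega
      exact this
    have htne : t ≠ i := ne_of_gt hit
    have hrr : I - 1 - t.val = r := by simp [ht]; omega
    have h' : t ∈ Aset i k ↔ t ∈ Aset i l := by rw [h]
    rw [mem_Aset, mem_Aset, hrr] at h'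
    rcases hbk : Nat.testBit k r with _ | _ <;> rcases hbl : Nat.testBit l r with _ | _ <;>
      simp [hbk, hbl, htne, hit] at h' ⊢
  · have h1 : k < 2 ^ r := lt_of_lt_of_le hk (Nat.pow_le_pow_right (by norm_num) hr)
    have h2 : l < 2 ^ r := lt_of_lt_of_le hl (Nat.pow_le_pow_right (by norm_num) hr)
    rw [Nat.testBit_lt_two_pow h1, Nat.testBit_lt_two_pow h2]


lemma psum_mono (i : Fin I) (n : Finset (Fin I) → ℕ) : Monotone (psum i n) := by
  intro a b h
  exact Finset.sum_le_sum_of_subset (Finset.range_subset_range.mpr h)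

lemma psum_le_psi {i : Fin I} (n : Finset (Fin I) → ℕ) {k : ℕ}
    (hk : k ≤ 2 ^ (I - 1 - i.val)) : psum i n k ≤ psi n i := by
  unfold psum psi
  rw [← Finset.sum_image (g := fun l => Aset i l) (s := Finset.range k) (f := n)
    (fun a ha b hb hab => Aset_inj
      (lt_of_lt_of_le (Finset.mem_range.mp ha) hk)
      (lt_of_lt_of_le (Finset.mem_range.mp hb) hk) hab)]
  apply Finset.sum_le_sum_of_subset
  intro A hA
  rcases Finset.mem_image.mp hA with ⟨l, _, rfl⟩
  simp [self_mem_Aset]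

lemma exists_blocker {i p : Fin I} (hip : i < p) {k l : ℕ}
    (hk : k < 2 ^ (I - 1 - i.val)) (hl : l ≤ k)
    (hpk : p ∈ Aset i k) (hpl : p ∉ Aset i l) :
    ∃ t : Fin I, (i < t ∧ t < p) ∧ t ∈ Aset i l := by
  by_contra hcon
  push_neg at hcon
  have hpI : p.val < I := p.isLt
  have hip' : i.val < p.val := hip
  set m := I - 1 - i.val with hm
  set Pp := I - 1 - p.val with hPp
  have hPpm : Pp < m := by omega
  have bk : Nat.testBit k Pp = false := by
    rcases mem_Aset.mp hpk with h | ⟨_, h⟩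
    · exact absurd h (ne_of_gt hip)
    · exact h
  have bl : Nat.testBit l Pp = true := by
    by_contra hb
    exact hpl (mem_Aset.mpr (Or.inr ⟨hip, by simpa using hb⟩))
  have hall : ∀ r, Pp ≤ r → r < m → Nat.testBit l r = true := by
    intro r hr1 hr2
    rcases eq_or_lt_of_le hr1 with rfl | hr1
    · exact bl
    · set t : Fin I := ⟨I - 1 - r, by omega⟩ with ht
      have h1 : i < t := by
        have : i.val < I - 1 - r := by omega
        exact this
      have h2 : t < p := by
        have : I - 1 - r < p.val := by omega
        exact this
      have := hcon t ⟨h1, h2⟩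
      rw [mem_Aset] at this
      push_neg at this
      have h3 := (this.2 h1)
      have hrr : I - 1 - t.val = r := by simp [ht]; omega
      rw [hrr] at h3
      simpa using h3
  -- take the largest differing bit
  set D := (Finset.range m).filter (fun r => Nat.testBit k r ≠ Nat.testBit l r) with hD
  have hPpD : Pp ∈ D := by
    simp only [hD, Finset.mem_filter, Finset.mem_range]
    exact ⟨hPpm, by rw [bk, bl]; simp⟩
  have hDne : D.Nonempty := ⟨Pp, hPpD⟩
  set r0 := D.max' hDne with hr0
  have hr0D : r0 ∈ D := D.max'_mem hDne
  have hr0m : r0 < m := by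
    have := (Finset.mem_filter.mp hr0D).1
    exact Finset.mem_range.mp this
  have hr0ne : Nat.testBit k r0 ≠ Nat.testBit l r0 := (Finset.mem_filter.mp hr0D).2
  have hr0Pp : Pp ≤ r0 := Finset.le_max' D Pp hPpD
  have hlr0 : Nat.testBit l r0 = true := hall r0 hr0Pp hr0m
  have hkr0 : Nat.testBit k r0 = false := by
    rcases hb : Nat.testBit k r0 with _ | _
    · rfl
    · rw [hb, hlr0] at hr0ne; simp at hr0ne
  have higher : ∀ s, r0 < s → Nat.testBit k s = Nat.testBit l s := by
    intro s hs
    rcases lt_or_ge s m with hsm | hsm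
    · by_contra hne
      have : s ∈ D := by
        simp only [hD, Finset.mem_filter, Finset.mem_range]
        exact ⟨hsm, hne⟩
      have := Finset.le_max' D s this
      omega
    · have h1 : k < 2 ^ s := lt_of_lt_of_le hk (Nat.pow_le_pow_right (by norm_num) hsm)
      have h2 : l < 2 ^ s := lt_of_lt_of_le (lt_of_le_of_lt hl hk)
        (Nat.pow_le_pow_right (by norm_num) hsm)
      rw [Nat.testBit_lt_two_pow h1, Nat.testBit_lt_two_pow h2]
  have : k < l := Nat.lt_of_testBit r0 hkr0 hlr0 higher
  omega

lemma psum_blocked {i p : Fin I} (hip : i < p) (n : Finset (Fin I) → ℕ) {k : ℕ}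
    (hk : k < 2 ^ (I - 1 - i.val)) (hpk : p ∈ Aset i k) :
    psum i n (k + 1) ≤ psi n p +
      ∑ t ∈ Finset.univ.filter (fun t => i < t ∧ t < p), psi n t := by
  classical
  set Φ := Finset.univ.filter (fun t : Fin I => i < t ∧ t < p) with hΦ
  set T := insert p Φ with hT
  have hpΦ : p ∉ Φ := by simp [hΦ]
  set c : ℕ → Fin I := fun l =>
    if h : ∃ t : Fin I, (i < t ∧ t < p) ∧ t ∈ Aset i l then h.choose else p with hc
  have hmaps : ∀ l ∈ Finset.range (k + 1), c l ∈ T ∧ c l ∈ Aset i l := by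
    intro l hl
    have hlk : l ≤ k := by
      have := Finset.mem_range.mp hl; omega
    by_cases h : ∃ t : Fin I, (i < t ∧ t < p) ∧ t ∈ Aset i l
    · have hch := h.choose_spec
      simp only [hc, dif_pos h]
      constructor
      · apply Finset.mem_insert_of_mem
        simp [hΦ, hch.1.1, hch.1.2]
      · exact hch.2
    · simp only [hc, dif_neg h]
      constructor
      · exact Finset.mem_insert_self _ _
      · by_contra hpl
        exact h (exists_blocker hip hk hlk hpk hpl)
    
  have key : psum i n (k + 1) =
      ∑ t ∈ T, ∑ l ∈ (Finset.range (k + 1)).filter (fun l => c l = t), n (Aset i l) := by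
    rw [Finset.sum_fiberwise_of_maps_to (fun l hl => (hmaps l hl).1)]
    rfl
  rw [key]
  have hbound : ∀ t ∈ T,
      (∑ l ∈ (Finset.range (k + 1)).filter (fun l => c l = t), n (Aset i l)) ≤ psi n t := by
    intro t ht
    rw [← Finset.sum_image (g := fun l => Aset i l)
      (s := (Finset.range (k + 1)).filter (fun l => c l = t)) (f := n) ?_]
    · apply Finset.sum_le_sum_of_subset
      intro A hA
      rcases Finset.mem_image.mp hA with ⟨l, hl, rfl⟩
      have hl' := Finset.mem_filter.mp hl
      have := (hmaps l hl'.1).2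
      rw [hl'.2] at this
      simp [psi, this]
    · intro a ha b hb hab
      have ha' := (Finset.mem_filter.mp ha).1
      have hb' := (Finset.mem_filter.mp hb).1
      have ha'' : a < 2 ^ (I - 1 - i.val) := by
        have := Finset.mem_range.mp ha'; omega
      have hb'' : b < 2 ^ (I - 1 - i.val) := by
        have := Finset.mem_range.mp hb'; omega
      exact Aset_inj ha'' hb'' hab
  calc ∑ t ∈ T, ∑ l ∈ (Finset.range (k + 1)).filter (fun l => c l = t), n (Aset i l)
      ≤ ∑ t ∈ T, psi n t := Finset.sum_le_sum hbound
    _ = psi n p + ∑ t ∈ Φ, psi n t := Finset.sum_insert hpΦ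


/-- the index of the set that gets decremented -/
noncomputable def kst {I : ℕ} (i : Fin I) (j : ℕ) (n : Finset (Fin I) → ℕ) : ℕ :=
  sInf {k | j ≤ psum i n (k + 1)}

lemma kst_spec {i : Fin I} {j : ℕ} {n : Finset (Fin I) → ℕ} (hj : 1 ≤ j)
    (hs : j ≤ psum i n (2 ^ (I - 1 - i.val))) :
    j ≤ psum i n (kst i j n + 1) ∧ psum i n (kst i j n) < j
      ∧ kst i j n < 2 ^ (I - 1 - i.val) := by
  have hpow : 1 ≤ 2 ^ (I - 1 - i.val) := Nat.one_le_two_pow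
  have hmem : (2 ^ (I - 1 - i.val) - 1) ∈ {k | j ≤ psum i n (k + 1)} := by
    simpa [Nat.sub_add_cancel hpow] using hs
  have h1 : j ≤ psum i n (kst i j n + 1) := Nat.sInf_mem ⟨_, hmem⟩
  have h3 : kst i j n < 2 ^ (I - 1 - i.val) :=
    lt_of_le_of_lt (Nat.sInf_le hmem) (by omega)
  refine ⟨h1, ?_, h3⟩
  rcases Nat.eq_zero_or_pos (kst i j n) with h | h
  · rw [h]; simp [psum]; omega
  · have hlt : kst i j n - 1 < sInf {k | j ≤ psum i n (k + 1)} := by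
      unfold kst at h ⊢; omega
    have := Nat.notMem_of_lt_sInf hlt
    simp only [Set.mem_setOf_eq, not_le] at this
    rwa [Nat.sub_add_cancel h] at this

lemma nAst_pos {i : Fin I} {j : ℕ} {n : Finset (Fin I) → ℕ} (hj : 1 ≤ j)
    (hs : j ≤ psum i n (2 ^ (I - 1 - i.val))) :
    1 ≤ n (Aset i (kst i j n)) := by
  obtain ⟨h1, h2, -⟩ := kst_spec hj hs
  rw [psum, Finset.sum_range_succ] at h1
  rw [psum] at h2
  omega

lemma psi_ftil (C : Fin I → ℕ) (i : Fin I) {j : ℕ} (hj : 1 ≤ j)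
    (n : Finset (Fin I) → ℕ) (q : Fin I) :
    psi (ftil C n (.s i j)) q =
      psi n q - (if j ≤ psum i n (2 ^ (I - 1 - i.val)) ∧ q ∈ Aset i (kst i j n)
        then 1 else 0) := by
  have hftil : ftil C n (.s i j) = fun B =>
      n B - if j ≤ psum i n (2 ^ (I - 1 - i.val)) ∧ B = Aset i (kst i j n)
        then 1 else 0 := rfl
  rw [hftil]
  by_cases hs : j ≤ psum i n (2 ^ (I - 1 - i.val))
  · by_cases hq : q ∈ Aset i (kst i j n)
    · have hA : Aset i (kst i j n) ∈ Finset.univ.filter (fun A => q ∈ A) := by simp [hq]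
      unfold psi
      rw [← Finset.add_sum_erase _ _ hA, ← Finset.add_sum_erase _ (fun A => n A) hA]
      have h1 : ∀ A ∈ (Finset.univ.filter (fun A => q ∈ A)).erase (Aset i (kst i j n)),
          (n A - if j ≤ psum i n (2 ^ (I - 1 - i.val)) ∧ A = Aset i (kst i j n)
            then 1 else 0) = n A := by
        intro A hA'
        have := Finset.ne_of_mem_erase hA'
        simp [this]
      rw [Finset.sum_congr rfl h1]
      have hpos := nAst_pos hj hs
      rw [if_pos (⟨hs, rfl⟩ : j ≤ psum i n (2 ^ (I - 1 - i.val)) ∧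
        Aset i (kst i j n) = Aset i (kst i j n)), if_pos ⟨hs, hq⟩]
      have hrw : ((Finset.univ.filter (fun A => q ∈ A)).erase (Aset i (kst i j n))).sum
          n = ∑ A ∈ (Finset.univ.filter (fun A => q ∈ A)).erase
          (Aset i (kst i j n)), n A := rfl
      rw [hrw]
      omega
    · simp only [hs, true_and, if_neg hq]
      unfold psi
      rw [Nat.sub_zero]
      apply Finset.sum_congr rfl
      intro A hA'
      have hqA : q ∈ A := (Finset.mem_filter.mp hA').2
      have : A ≠ Aset i (kst i j n) := by
        rintro rfl; exact hq hqA
      simp [this]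
  · simp only [hs, false_and, if_neg, if_false]
    unfold psi
    rw [Nat.sub_zero]
    apply Finset.sum_congr rfl
    intro A _
    simp [hs]


/-- the all-singletons detailed state -/
def nsing (x : Fin I → ℕ) : Finset (Fin I) → ℕ :=
  fun A => ∑ q, if A = ({q} : Finset (Fin I)) then x q else 0

lemma psi_nsing (x : Fin I → ℕ) (t : Fin I) : psi (nsing x) t = x t := by
  unfold psi nsing
  rw [Finset.sum_comm]
  have : ∀ q : Fin I,
      (∑ A ∈ Finset.univ.filter (fun A => t ∈ A), if A = ({q} : Finset (Fin I)) then x q else 0)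
        = if t = q then x q else 0 := by
    intro q
    rw [Finset.sum_ite_eq']
    simp [Finset.mem_singleton, eq_comm]
  rw [Finset.sum_congr rfl (fun q _ => this q)]
  simp

lemma nsing_mem {C : Fin I → ℕ} {x : Fin I → ℕ} (hx : x ∈ Xspace C) :
    nsing x ∈ Nspace C := by
  constructor
  · apply Finset.sum_eq_zero
    intro q _
    rw [if_neg]
    intro h
    exact (Finset.singleton_ne_empty q) h.symm
  · intro t
    have : psi (nsing x) t ≤ C t := by rw [psi_nsing]; exact hx t
    exact this


-- the singleton part of a detailed state, evaluated on an `Aset`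
lemma nsing_Aset {i : Fin I} (g : Fin I → ℕ) {l : ℕ} (hl : l < 2 ^ (I - 1 - i.val)) :
    nsing g (Aset i l) = if l = 2 ^ (I - 1 - i.val) - 1 then g i else 0 := by
  have hpow : 1 ≤ 2 ^ (I - 1 - i.val) := Nat.one_le_two_pow
  by_cases h : l = 2 ^ (I - 1 - i.val) - 1
  · subst h
    rw [if_pos rfl, Aset_top]
    unfold nsing
    have heq : ∀ q : Fin I, (({i} : Finset (Fin I)) = {q}) ↔ (q = i) := by
      intro q; rw [Finset.singleton_inj]; exact eq_comm
    simp only [heq]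
    rw [Finset.sum_ite_eq' Finset.univ i g]
    simp
  · rw [if_neg h]
    apply Finset.sum_eq_zero
    intro q _
    rw [if_neg]
    intro hAq
    have hiq : i ∈ ({q} : Finset (Fin I)) := hAq ▸ self_mem_Aset i l
    rw [Finset.mem_singleton] at hiq
    subst hiq
    have : Aset i l = Aset i (2 ^ (I - 1 - i.val) - 1) := by rw [Aset_top]; exact hAq
    exact h (Aset_inj hl (by omega) this)

lemma psum_nsing {i : Fin I} (g : Fin I → ℕ) {K : ℕ} (hK : K ≤ 2 ^ (I - 1 - i.val)) :
    psum i (nsing g) K = if 2 ^ (I - 1 - i.val) - 1 < K then g i else 0 := by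
  unfold psum
  rw [Finset.sum_congr rfl (fun l hl =>
    nsing_Aset g (lt_of_lt_of_le (Finset.mem_range.mp hl) hK))]
  rw [Finset.sum_ite_eq' (Finset.range K) (2 ^ (I - 1 - i.val) - 1) (fun _ => g i)]
  simp [Finset.mem_range]

/-- the witness detailed state for `p > i`: `b` units on `{i,p}`, `f t` units on `{i,t}`,
`g q` units on `{q}`. -/
def nwit (i p : Fin I) (b : ℕ) (f g : Fin I → ℕ) : Finset (Fin I) → ℕ := fun A =>
  (if A = ({i, p} : Finset (Fin I)) then b else 0)
  + (∑ t ∈ Finset.univ.filter (fun t => i < t ∧ t < p),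
      if A = ({i, t} : Finset (Fin I)) then f t else 0)
  + nsing g A

lemma sum_filter_ite_eq (q : Fin I) (S : Finset (Fin I)) (c : ℕ) :
    (∑ A ∈ Finset.univ.filter (fun A => q ∈ A), if A = S then c else 0)
      = if q ∈ S then c else 0 := by
  rw [Finset.sum_ite_eq']
  simp

lemma psi_nwit {i p : Fin I} (hip : i < p) (b : ℕ) (f g : Fin I → ℕ)
    (hf0 : ∀ t, ¬(i < t ∧ t < p) → f t = 0) (q : Fin I) :
    psi (nwit i p b f g) q =
      (if q = i ∨ q = p then b else 0)
      + (if q = i then ∑ t ∈ Finset.univ.filter (fun t => i < t ∧ t < p), f t else f q)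
      + g q := by
  have hsplit : psi (nwit i p b f g) q =
      (∑ A ∈ Finset.univ.filter (fun A => q ∈ A), if A = ({i, p} : Finset (Fin I)) then b else 0)
      + (∑ A ∈ Finset.univ.filter (fun A => q ∈ A),
          ∑ t ∈ Finset.univ.filter (fun t => i < t ∧ t < p),
            if A = ({i, t} : Finset (Fin I)) then f t else 0)
      + psi (nsing g) q := by
    unfold psi nwit
    rw [Finset.sum_add_distrib, Finset.sum_add_distrib]
  rw [hsplit, psi_nsing, sum_filter_ite_eq]
  congr 2
  · congr 1
    simp [Finset.mem_insert, Finset.mem_singleton]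
  · rw [Finset.sum_comm]
    by_cases hq : q = i
    · subst hq
      rw [if_pos rfl]
      apply Finset.sum_congr rfl
      intro t _
      rw [Finset.sum_congr rfl (fun A _ => rfl), sum_filter_ite_eq]
      simp
    · rw [if_neg hq]
      have hstep : ∀ t ∈ Finset.univ.filter (fun t : Fin I => i < t ∧ t < p),
          (∑ A ∈ Finset.univ.filter (fun A => q ∈ A),
            if A = ({i, t} : Finset (Fin I)) then f t else 0)
          = if t = q then f t else 0 := by
        intro t _
        rw [sum_filter_ite_eq]
        have : q ∈ ({i, t} : Finset (Fin I)) ↔ t = q := by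
          simp [Finset.mem_insert, Finset.mem_singleton, hq, eq_comm]
        simp [this]
      rw [Finset.sum_congr rfl hstep, Finset.sum_ite_eq']
      by_cases hqΦ : q ∈ Finset.univ.filter (fun t : Fin I => i < t ∧ t < p)
      · rw [if_pos hqΦ]
      · rw [if_neg hqΦ]
        rw [hf0 q (by simpa using hqΦ)]

lemma nwit_Aset {i p : Fin I} (hip : i < p) (b : ℕ) (f g : Fin I → ℕ) {l : ℕ}
    (hl : l < 2 ^ (I - 1 - i.val)) :
    nwit i p b f g (Aset i l) =
      (if l = kp i p then b else 0)
      + (∑ t ∈ Finset.univ.filter (fun t => i < t ∧ t < p),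
          if l = kp i t then f t else 0)
      + (if l = 2 ^ (I - 1 - i.val) - 1 then g i else 0) := by
  have hpow : 1 ≤ 2 ^ (I - 1 - i.val) := Nat.one_le_two_pow
  have hkp_lt : ∀ t : Fin I, kp i t < 2 ^ (I - 1 - i.val) := by
    intro t
    calc kp i t ≤ 2 ^ (I - 1 - i.val) - 1 := Nat.sub_le _ _
      _ < 2 ^ (I - 1 - i.val) := Nat.sub_lt (Nat.two_pow_pos _) one_pos
  unfold nwit
  congr 1
  · congr 1
    · by_cases h : l = kp i p
      · subst h; rw [if_pos (Aset_kp hip), if_pos rfl]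
      · rw [if_neg ?_, if_neg h]
        intro hA
        exact h (Aset_inj hl (hkp_lt p) (by rw [hA, Aset_kp hip]))
    · apply Finset.sum_congr rfl
      intro t ht
      have hit : i < t := (Finset.mem_filter.mp ht).2.1
      by_cases h : l = kp i t
      · subst h; rw [if_pos (Aset_kp hit), if_pos rfl]
      · rw [if_neg ?_, if_neg h]
        intro hA
        exact h (Aset_inj hl (hkp_lt t) (by rw [hA, Aset_kp hit]))
  · exact nsing_Aset g hl

lemma psum_nwit {i p : Fin I} (hip : i < p) (b : ℕ) (f g : Fin I → ℕ) {K : ℕ}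
    (hK : K ≤ 2 ^ (I - 1 - i.val)) :
    psum i (nwit i p b f g) K =
      (if kp i p < K then b else 0)
      + (∑ t ∈ Finset.univ.filter (fun t => i < t ∧ t < p),
          if kp i t < K then f t else 0)
      + (if 2 ^ (I - 1 - i.val) - 1 < K then g i else 0) := by
  unfold psum
  rw [Finset.sum_congr rfl (fun l hl =>
    nwit_Aset hip b f g (lt_of_lt_of_le (Finset.mem_range.mp hl) hK))]
  rw [Finset.sum_add_distrib, Finset.sum_add_distrib]
  congr 1
  · congr 1
    · rw [Finset.sum_ite_eq' (Finset.range K) (kp i p) (fun _ => b)]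
      simp [Finset.mem_range]
    · rw [Finset.sum_comm]
      apply Finset.sum_congr rfl
      intro t _
      rw [Finset.sum_ite_eq' (Finset.range K) (kp i t) (fun _ => f t)]
      simp [Finset.mem_range]
  · rw [Finset.sum_ite_eq' (Finset.range K) (2 ^ (I - 1 - i.val) - 1) (fun _ => g i)]
    simp [Finset.mem_range]


/-- greedy allocation -/
lemma alloc {α : Type*} [DecidableEq α] (T : Finset α) (Mv : α → ℕ) :
    ∀ a : ℕ, a ≤ ∑ t ∈ T, Mv t →
    ∃ f : α → ℕ, (∀ t, f t ≤ Mv t) ∧ (∀ t ∉ T, f t = 0) ∧ ∑ t ∈ T, f t = a := by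
  induction T using Finset.induction_on with
  | empty =>
    intro a ha
    simp only [Finset.sum_empty, Nat.le_zero] at ha
    exact ⟨fun _ => 0, fun _ => Nat.zero_le _, fun _ _ => rfl, by simp [ha]⟩
  | @insert t T ht ih =>
    intro a ha
    rw [Finset.sum_insert ht] at ha
    set a1 := min a (Mv t) with ha1
    obtain ⟨f, hf1, hf2, hf3⟩ := ih (a - a1) (by omega)
    refine ⟨fun s => if s = t then a1 else f s, ?_, ?_, ?_⟩
    · intro s
      by_cases h : s = t
      · simp only [h, if_true]
        exact min_le_right _ _
      · simpa [h] using hf1 s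
    · intro s hs
      have h1 : s ≠ t := fun h => hs (h ▸ Finset.mem_insert_self t T)
      have h2 : s ∉ T := fun h => hs (Finset.mem_insert_of_mem h)
      simp [h1, hf2 s h2]
    · rw [Finset.sum_insert ht, if_pos rfl]
      have : ∀ s ∈ T, (if s = t then a1 else f s) = f s := by
        intro s hs
        have hst : s ≠ t := by rintro rfl; exact ht hs
        rw [if_neg hst]
      rw [Finset.sum_congr rfl this, hf3]
      omega


lemma preimage_nonempty {C : Fin I → ℕ} {x : Fin I → ℕ} (hx : x ∈ Xspace C) :
    {n | n ∈ Nspace C ∧ psi n = x}.Nonempty :=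
  ⟨nsing x, nsing_mem hx, funext (psi_nsing x)⟩

/-- inner infimum, case `p < i` -/
lemma finf_lt {C : Fin I → ℕ} {x : Fin I → ℕ} (hx : x ∈ Xspace C)
    {i p : Fin I} {j : ℕ} (hj : 1 ≤ j) (hpi : p < i) :
    finf C x (.s i j) p = x p := by
  have hind : ∀ n : Finset (Fin I) → ℕ, psi (ftil C n (.s i j)) p = psi n p := by
    intro n
    rw [psi_ftil C i hj n p, if_neg, Nat.sub_zero]
    rintro ⟨-, hmem⟩
    rcases mem_Aset.mp hmem with rfl | ⟨h, -⟩
    · exact absurd hpi (lt_irrefl _)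
    · exact absurd (lt_trans hpi h) (lt_irrefl _)
  apply le_antisymm
  · apply Nat.sInf_le
    exact ⟨nsing x, ⟨nsing_mem hx, funext (psi_nsing x)⟩, by
      beta_reduce; rw [hind, psi_nsing]⟩
  · apply le_csInf ((preimage_nonempty hx).image _)
    rintro b ⟨n, ⟨hn, rfl⟩, rfl⟩
    beta_reduce
    rw [hind]

/-- inner infimum, case `p = i` -/
lemma finf_eq {C : Fin I → ℕ} {x : Fin I → ℕ} (hx : x ∈ Xspace C)
    {i : Fin I} {j : ℕ} (hj : 1 ≤ j) :
    finf C x (.s i j) i = x i - if j ≤ x i then 1 else 0 := by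
  apply le_antisymm
  · apply Nat.sInf_le
    refine ⟨nsing x, ⟨nsing_mem hx, funext (psi_nsing x)⟩, ?_⟩
    beta_reduce
    rw [psi_ftil C i hj (nsing x) i, psi_nsing]
    have hps : psum i (nsing x) (2 ^ (I - 1 - i.val)) = x i := by
      rw [psum_nsing x (le_refl _), if_pos]
      have : 1 ≤ 2 ^ (I - 1 - i.val) := Nat.one_le_two_pow
      omega
    by_cases h : j ≤ x i
    · rw [if_pos ⟨by rw [hps]; exact h, self_mem_Aset i _⟩, if_pos h]
    · rw [if_neg, if_neg h]
      rintro ⟨hs, -⟩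
      rw [hps] at hs
      exact h hs
  · apply le_csInf ((preimage_nonempty hx).image _)
    rintro v ⟨n, ⟨hn, rfl⟩, rfl⟩
    beta_reduce
    rw [psi_ftil C i hj n i]
    by_cases hs2 : j ≤ psum i n (2 ^ (I - 1 - i.val)) ∧ i ∈ Aset i (kst i j n)
    · have h1 : j ≤ psi n i := le_trans hs2.1 (psum_le_psi n (le_refl _))
      rw [if_pos hs2, if_pos h1]
    · rw [if_neg hs2, Nat.sub_zero]
      exact le_trans (Nat.sub_le _ _) (le_refl _)

/-- inner infimum, case `p > i` -/
lemma finf_gt {C : Fin I → ℕ} {x : Fin I → ℕ} (hx : x ∈ Xspace C)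
    {i p : Fin I} {j : ℕ} (hj : 1 ≤ j) (hj2 : j ≤ C i) (hip : i < p) :
    finf C x (.s i j) p = x p -
      if 0 < x p ∧ j ≤ (∑ t ∈ Finset.univ.filter (fun t => i < t ∧ t < p), x t) + x p
          ∧ j ≤ x i
        then 1 else 0 := by
  classical
  set m2 := 2 ^ (I - 1 - i.val) with hm2
  have hpow1 : 1 ≤ m2 := Nat.one_le_two_pow
  have hipI : i.val < p.val := hip
  have hpI : p.val < I := p.isLt
  have hm1 : 1 ≤ I - 1 - i.val := by omega
  have hpow2 : 2 ≤ m2 := by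
    rw [hm2]
    calc 2 = 2 ^ 1 := rfl
    _ ≤ 2 ^ (I - 1 - i.val) := Nat.pow_le_pow_right (by norm_num) hm1
  have hppow : 2 ^ (I - 1 - p.val) < m2 :=
    Nat.pow_lt_pow_right one_lt_two (by omega)
  have hkpp_lt : kp i p < m2 - 1 := by
    have h1 : 1 ≤ 2 ^ (I - 1 - p.val) := Nat.one_le_two_pow
    unfold kp
    omega
  set Φ := Finset.univ.filter (fun t : Fin I => i < t ∧ t < p) with hΦ
  set Sx := ∑ t ∈ Φ, x t with hSx
  apply le_antisymm
  · -- attained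
    by_cases hcond : 0 < x p ∧ j ≤ Sx + x p ∧ j ≤ x i
    swap
    · -- condition false: value x p attained by nsing
      rw [if_neg hcond]
      have hv : psi (ftil C (nsing x) (.s i j)) p ≤ x p := by
        rw [psi_ftil C i hj (nsing x) p, psi_nsing]
        omega
      exact le_trans (Nat.sInf_le ⟨nsing x, ⟨nsing_mem hx, funext (psi_nsing x)⟩, rfl⟩) hv
    obtain ⟨hxp, hjS, hjxi⟩ := hcond
    rw [if_pos ⟨hxp, hjS, hjxi⟩]
    -- build the witness
    set a := min (j - 1) Sx with ha
    obtain ⟨f, hf1, hf2, hf3⟩ := alloc Φ x a (by omega)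
    set b := j - a with hb
    have hb1 : 1 ≤ b := by omega
    have hbxp : b ≤ x p := by omega
    have hfi : f i = 0 := hf2 i (by simp [hΦ])
    have hfp : f p = 0 := hf2 p (by simp [hΦ])
    have hf0 : ∀ t, ¬(i < t ∧ t < p) → f t = 0 := by
      intro t ht; exact hf2 t (by simp [hΦ, ht])
    set g : Fin I → ℕ := fun q =>
      x q - ((if q = i then j else 0) + (if q = p then b else 0) + f q) with hg
    set N := nwit i p b f g with hN
    have hpi : p ≠ i := ne_of_gt hip
    have hip' : i ≠ p := Ne.symm (ne_of_gt hip)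
    have hpsiN : ∀ q, psi N q = x q := by
      intro q
      rw [hN, psi_nwit hip b f g hf0 q, ← hΦ, hf3, hg]
      by_cases hqi : q = i
      · subst hqi
        simp [hip', hfi]
        omega
      · by_cases hqp : q = p
        · subst hqp
          simp [hpi, hfp]
          omega
        · have hor : ¬(q = i ∨ q = p) := by tauto
          simp only [if_neg hor, if_neg hqi, if_neg hqp]
          have hfq : f q ≤ x q := hf1 q
          omega
    have hNmem : N ∈ Nspace C := by
      constructor
      · rw [hN]
        unfold nwit
        rw [if_neg (fun h => (Finset.insert_ne_empty _ _) h.symm)]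
        rw [Finset.sum_eq_zero (fun t _ =>
          if_neg (fun h => (Finset.insert_ne_empty _ _) h.symm))]
        have : nsing g ∅ = 0 := by
          apply Finset.sum_eq_zero
          intro q _
          exact if_neg (fun h => (Finset.singleton_ne_empty q) h.symm)
        rw [this]
        rfl
      · intro t
        have : psi N t ≤ C t := by rw [hpsiN]; exact hx t
        exact this
    -- psum computations
    have hkpt_lt : ∀ t ∈ Φ, kp i t < kp i p := by
      intro t ht
      have h1 : i < t := (Finset.mem_filter.mp ht).2.1
      have h2 : t < p := (Finset.mem_filter.mp ht).2.2
      have h2' : t.val < p.val := h2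
      have h3 : 2 ^ (I - 1 - p.val) < 2 ^ (I - 1 - t.val) :=
        Nat.pow_lt_pow_right one_lt_two (by omega)
      have h4 : 2 ^ (I - 1 - t.val) < m2 := by
        have h1' : i.val < t.val := h1
        exact Nat.pow_lt_pow_right one_lt_two (by omega)
      unfold kp
      omega
    have hpsum1 : psum i N (kp i p) = a := by
      rw [hN, psum_nwit hip b f g (le_of_lt (by omega : kp i p < m2)), ← hΦ]
      rw [if_neg (lt_irrefl _), if_neg (by omega : ¬ m2 - 1 < kp i p)]
      rw [Finset.sum_congr rfl (fun t ht => if_pos (hkpt_lt t ht)), hf3]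
      omega
    have hpsum2 : psum i N (kp i p + 1) = j := by
      rw [hN, psum_nwit hip b f g (by omega : kp i p + 1 ≤ m2), ← hΦ]
      rw [if_pos (by omega : kp i p < kp i p + 1),
        if_neg (by omega : ¬ m2 - 1 < kp i p + 1)]
      rw [Finset.sum_congr rfl (fun t ht => if_pos (by have := hkpt_lt t ht; omega)), hf3]
      omega
    have hgi : g i = x i - j := by
      rw [hg]
      simp [hip', hfi]
    have hpsumtot : psum i N m2 = x i := by
      rw [hN, psum_nwit hip b f g (le_refl _), ← hΦ]
      rw [if_pos (by omega : kp i p < m2), if_pos (by omega : m2 - 1 < m2)]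
      rw [Finset.sum_congr rfl (fun t ht => if_pos (by have := hkpt_lt t ht; omega)), hf3]
      rw [hgi]
      omega
    have hserv : j ≤ psum i N m2 := by rw [hpsumtot]; exact hjxi
    have hkst : kst i j N = kp i p := by
      apply le_antisymm
      · exact Nat.sInf_le (by rw [Set.mem_setOf_eq, hpsum2])
      · by_contra hlt
        push_neg at hlt
        obtain ⟨h1, -, -⟩ := kst_spec hj (by rw [hm2] at hserv; exact hserv)
        have : psum i N (kst i j N + 1) ≤ psum i N (kp i p) :=
          psum_mono i N (by omega)
        rw [hpsum1] at this
        omega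
    have hval : psi (ftil C N (.s i j)) p = x p - 1 := by
      rw [psi_ftil C i hj N p, hpsiN, if_pos]
      refine ⟨by rw [← hm2]; exact hserv, ?_⟩
      rw [hkst, Aset_kp hip]
      simp
    exact Nat.sInf_le ⟨N, ⟨hNmem, funext hpsiN⟩, hval⟩
  · -- lower bound
    apply le_csInf ((preimage_nonempty hx).image _)
    rintro v ⟨n, ⟨hn, rfl⟩, rfl⟩
    beta_reduce
    rw [psi_ftil C i hj n p]
    by_cases hind : j ≤ psum i n (2 ^ (I - 1 - i.val)) ∧ p ∈ Aset i (kst i j n)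
    · obtain ⟨hs, hpA⟩ := hind
      obtain ⟨h1, h2, h3⟩ := kst_spec hj hs
      have hxi : j ≤ psi n i := le_trans hs (psum_le_psi n (le_refl _))
      have hblock0 : j ≤ psi n p + ∑ t ∈ Φ, psi n t :=
        le_trans h1 (psum_blocked hip n h3 hpA)
      have hblock : j ≤ Sx + psi n p := by rw [hSx]; omega
      have hxp : 1 ≤ psi n p := by
        have hA := nAst_pos hj hs
        have : n (Aset i (kst i j n)) ≤ psi n p := by
          unfold psi
          exact Finset.single_le_sum (fun A _ => Nat.zero_le (n A)) (by simp [hpA])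
        omega
      rw [if_pos ⟨hxp, hblock, hxi⟩, if_pos ⟨hs, hpA⟩]
    · rw [if_neg hind]
      omega


end lem64aux

/-- Lemma 6.4: lower envelope of the infimum chain. -/
theorem stmt14 (I : ℕ) (hI : 1 ≤ I) (C : Fin I → ℕ) (hC : ∀ i, 1 ≤ C i)
    (m M : Fin I → ℕ) (hm : m ∈ Xspace C) (hM : M ∈ Xspace C) (hmM : m ≤ M)
    (i : Fin I) (j : ℕ) (hj1 : 1 ≤ j) (hj2 : j ≤ C i) :
    ∀ p : Fin I,
      (p < i → (Fenv C m M (.s i j)).1 p = m p)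
      ∧ (p = i → (Fenv C m M (.s i j)).1 p = m i - if j ≤ m i then 1 else 0)
      ∧ (i < p → (Fenv C m M (.s i j)).1 p =
          m p - if 0 < m p ∧
              j ≤ min ((∑ t ∈ Finset.univ.filter (fun t => i < t ∧ t < p), M t) + m p) (M i)
            then 1 else 0) := by
  intro p
  have hFenv : ∀ q : Fin I, (Fenv C m M (.s i j)).1 q
      = sInf ((fun x => finf C x (.s i j) q) '' Set.Icc m M) := fun q => rfl
  have hIccX : ∀ x ∈ Set.Icc m M, x ∈ Xspace C := fun x hx t => le_trans (hx.2 t) (hM t)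
  have hne : (Set.Icc m M).Nonempty := Set.nonempty_Icc.mpr hmM
  have hmIcc : m ∈ Set.Icc m M := ⟨le_refl m, hmM⟩
  refine ⟨?_, ?_, ?_⟩
  · -- p < i
    intro hpi
    rw [hFenv p]
    apply le_antisymm
    · exact Nat.sInf_le ⟨m, hmIcc, by beta_reduce; exact finf_lt (hIccX m hmIcc) hj1 hpi⟩
    · apply le_csInf (hne.image _)
      rintro v ⟨x, hx, rfl⟩
      beta_reduce
      rw [finf_lt (hIccX x hx) hj1 hpi]
      exact hx.1 p
  · -- p = i
    rintro rfl
    rw [hFenv p]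
    apply le_antisymm
    · exact Nat.sInf_le ⟨m, hmIcc, by beta_reduce; exact finf_eq (hIccX m hmIcc) hj1⟩
    · apply le_csInf (hne.image _)
      rintro v ⟨x, hx, rfl⟩
      beta_reduce
      rw [finf_eq (hIccX x hx) hj1]
      have hmx : m p ≤ x p := hx.1 p
      by_cases h1 : j ≤ m p
      · rw [if_pos h1, if_pos (le_trans h1 hmx)]
        exact Nat.sub_le_sub_right hmx 1
      · rw [if_neg h1]
        by_cases h2 : j ≤ x p
        · rw [if_pos h2]; omega
        · rw [if_neg h2]; omega
  · -- i < p
    intro hip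
    rw [hFenv p]
    set Φ := Finset.univ.filter (fun t : Fin I => i < t ∧ t < p) with hΦ
    set SM := ∑ t ∈ Φ, M t with hSM
    have hpi' : p ≠ i := ne_of_gt hip
    by_cases hcond : 0 < m p ∧ j ≤ min (SM + m p) (M i)
    · rw [if_pos hcond]
      obtain ⟨hc1, hc2⟩ := hcond
      rw [le_min_iff] at hc2
      obtain ⟨hc2a, hc2b⟩ := hc2
      set x₀ : Fin I → ℕ := fun q =>
        if q = i then max (m i) j else if i < q ∧ q < p then M q else m q with hx₀
      have hx₀i : x₀ i = max (m i) j := by rw [hx₀]; simp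
      have hx₀p : x₀ p = m p := by
        rw [hx₀]
        simp only [if_neg hpi']
        rw [if_neg (by rintro ⟨-, h⟩; exact lt_irrefl p h)]
      have hx₀Icc : x₀ ∈ Set.Icc m M := by
        constructor
        · intro q
          rw [hx₀]
          by_cases hq : q = i
          · subst hq; simp
          · simp only [if_neg hq]
            by_cases hq2 : i < q ∧ q < p
            · rw [if_pos hq2]; exact hmM q
            · rw [if_neg hq2]
        · intro q
          rw [hx₀]
          by_cases hq : q = i
          · subst hq
            simp only [if_pos rfl]
            exact max_le (hmM q) hc2b
          · simp only [if_neg hq]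
            by_cases hq2 : i < q ∧ q < p
            · rw [if_pos hq2]
            · rw [if_neg hq2]; exact hmM q
      have hSx₀ : ∑ t ∈ Φ, x₀ t = SM := by
        rw [hSM]
        apply Finset.sum_congr rfl
        intro t ht
        have h1 : i < t := (Finset.mem_filter.mp ht).2.1
        have h2 : t < p := (Finset.mem_filter.mp ht).2.2
        rw [hx₀]
        simp only [if_neg (ne_of_gt h1)]
        rw [if_pos (⟨h1, h2⟩ : i < t ∧ t < p)]
      apply le_antisymm
      · refine Nat.sInf_le ⟨x₀, hx₀Icc, ?_⟩
        beta_reduce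
        rw [finf_gt (hIccX x₀ hx₀Icc) hj1 hj2 hip, ← hΦ, hSx₀, hx₀p, hx₀i]
        rw [if_pos ⟨hc1, hc2a, le_max_right _ _⟩]
      · apply le_csInf (hne.image _)
        rintro v ⟨x, hx, rfl⟩
        beta_reduce
        rw [finf_gt (hIccX x hx) hj1 hj2 hip, ← hΦ]
        have hmx : m p ≤ x p := hx.1 p
        by_cases hcx : 0 < x p ∧ j ≤ (∑ t ∈ Φ, x t) + x p ∧ j ≤ x i
        · rw [if_pos hcx]; omega
        · rw [if_neg hcx]; omega
    · rw [if_neg hcond]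
      have hcondx : ∀ x ∈ Set.Icc m M, x p = m p →
          ¬(0 < x p ∧ j ≤ (∑ t ∈ Φ, x t) + x p ∧ j ≤ x i) := by
        rintro x hx hxp ⟨h1, h2, h3⟩
        apply hcond
        refine ⟨hxp ▸ h1, le_min ?_ ?_⟩
        · calc j ≤ (∑ t ∈ Φ, x t) + x p := h2
            _ ≤ SM + m p := by
              rw [hSM, hxp]
              exact Nat.add_le_add_right (Finset.sum_le_sum (fun t _ => hx.2 t)) _
        · exact le_trans h3 (hx.2 i)
      apply le_antisymm
      · refine Nat.sInf_le ⟨m, hmIcc, ?_⟩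
        beta_reduce
        rw [finf_gt (hIccX m hmIcc) hj1 hj2 hip, ← hΦ]
        rw [if_neg (hcondx m hmIcc rfl), Nat.sub_zero]
      · apply le_csInf (hne.image _)
        rintro v ⟨x, hx, rfl⟩
        beta_reduce
        rw [finf_gt (hIccX x hx) hj1 hj2 hip, ← hΦ]
        have hmx : m p ≤ x p := hx.1 p
        by_cases hcx : 0 < x p ∧ j ≤ (∑ t ∈ Φ, x t) + x p ∧ j ≤ x i
        · rw [if_pos hcx]
          by_contra hlt
          push_neg at hlt
          have hxp : x p = m p := by omega
          exact hcondx x hx hxp hcx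
        · rw [if_neg hcx]; omega

end ATO
end

section
/- Hitting time to zero for the generalized ATO-POS system (Proposition B.1): assume δ := min_{x∈X, x≠0} (Σ_{i=1}^I μ_i(x)) − Σ_{i=1}^I λ_i > 0. Then the hitting time of the zero state from the full state C = (C_1,…,C_I), namely τ_0 = min{t ≥ 0 : g(C, u_1⋯u_t) = 0} (where g(x, w) denotes iterated application along the word w, u_1 first), satisfies E[τ_0] ≤ (Λ/δ)·Σ_{i=1}^I C_i. -/
/-!
Take `V(x) = ∑ᵢ xᵢ`. An arrival `d_A` raises `V` by at most `|A|`, and a service lowers it by one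
exactly when it removes an item, which happens with total probability `∑ᵢ μᵢ(x) / Λ`. Hence away
from `0` the one-step drift of `V` is at most `(∑ᵢ λᵢ - ∑ᵢ μᵢ(x)) / Λ ≤ -δ / Λ`. A Foster–Lyapunov
induction turns this into `(δ / Λ) ∑ₙ P(τ₀ > n) ≤ V(C)`, and `∑ₙ P(τ₀ > n) = E[τ₀]`.
-/

open MeasureTheory Finset ENNReal

namespace ATO

/-- Events for the generalized ATO-POS model: joint arrivals `d A` and abstract
service events drawn from a type `S`. -/
inductive GEv (I : ℕ) (S : Type) where
  | d : Finset (Fin I) → GEv I S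
  | s : S → GEv I S

instance (I : ℕ) (S : Type) : MeasurableSpace (GEv I S) := ⊤

/-- Iterated application of a transition function along a word (head applied first). -/
def iterL {σ E : Type*} (f : σ → E → σ) : σ → List E → σ
  | x, [] => x
  | x, a :: w => iterL f (f x a) w

section Survival

variable {σ E : Type*} [Fintype E] (f : σ → E → σ) (Z : Set σ) (prob : E → ℝ≥0∞)

open scoped Classical in
noncomputable def survivalProb : ℕ → σ → ℝ≥0∞
  | 0, x => if x ∈ Z then 0 else 1
  | n + 1, x => if x ∈ Z then 0 else ∑ e, prob e * survivalProb n (f x e)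

variable {f Z prob}

theorem mul_sum_range_survivalProb_le {X : Set σ} (hX : ∀ x ∈ X, ∀ e, f x e ∈ X)
    {V : σ → ℝ≥0∞} {c : ℝ≥0∞} (hV : ∀ x ∈ X, x ∉ Z → c + ∑ e, prob e * V (f x e) ≤ V x)
    (N : ℕ) : ∀ x ∈ X, c * ∑ n ∈ range N, survivalProb f Z prob n x ≤ V x := by
  induction N with
  | zero => simp
  | succ N ih =>
    intro x hx
    by_cases hxZ : x ∈ Z
    · simp [sum_range_succ', survivalProb, hxZ]
    calc c * ∑ n ∈ range (N + 1), survivalProb f Z prob n x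
        = c + ∑ e, prob e * (c * ∑ n ∈ range N, survivalProb f Z prob n (f x e)) := by
          simp only [sum_range_succ', survivalProb, hxZ, if_false, mul_add, mul_one,
            mul_sum, mul_left_comm c]
          rw [sum_comm, add_comm]
      _ ≤ c + ∑ e, prob e * V (f x e) := by
          gcongr with e
          exact ih _ (hX x hx e)
      _ ≤ V x := hV x hx hxZ

theorem mul_tsum_survivalProb_le {X : Set σ} (hX : ∀ x ∈ X, ∀ e, f x e ∈ X)
    {V : σ → ℝ≥0∞} {c : ℝ≥0∞} (hV : ∀ x ∈ X, x ∉ Z → c + ∑ e, prob e * V (f x e) ≤ V x)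
    {x : σ} (hx : x ∈ X) : c * ∑' n, survivalProb f Z prob n x ≤ V x := by
  rw [ENNReal.tsum_eq_iSup_nat, ENNReal.mul_iSup]
  exact iSup_le fun N => mul_sum_range_survivalProb_le hX hV N x hx

end Survival

section Paths

variable {σ E : Type*} (f : σ → E → σ) (Z : Set σ)

def avoids : σ → List E → Prop
  | x, [] => x ∉ Z
  | x, e :: w => x ∉ Z ∧ avoids (f x e) w

variable {f Z}

theorem avoids_iff_forall_take {x : σ} {w : List E} :
    avoids f Z x w ↔ ∀ t ≤ w.length, iterL f x (w.take t) ∉ Z := by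
  induction w generalizing x with
  | nil => simp [avoids, iterL]
  | cons e w ih =>
    rw [avoids, ih]
    constructor
    · rintro ⟨hx, h⟩ (_ | t) ht
      · simpa [iterL] using hx
      · simpa [iterL] using h t (by simpa using ht)
    · intro h
      exact ⟨by simpa [iterL] using h 0 (Nat.zero_le _),
        fun t ht => by simpa [iterL] using h (t + 1) (by simpa using ht)⟩

open scoped Classical in
theorem survivalProb_eq_sum [Fintype E] (prob : E → ℝ≥0∞) (n : ℕ) (x : σ) :
    survivalProb f Z prob n x
      = ∑ w : Fin n → E with avoids f Z x (List.ofFn w), ∏ j, prob (w j) := by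
  induction n generalizing x with
  | zero => by_cases hx : x ∈ Z <;> simp [survivalProb, avoids, hx]
  | succ n ih =>
    rw [sum_filter, ← (Fin.consEquiv fun _ => E).sum_comp, Fintype.sum_prod_type]
    by_cases hx : x ∈ Z
    · simp [survivalProb, avoids, hx]
    simp only [survivalProb, hx, if_false, ih, sum_filter, mul_sum]
    refine sum_congr rfl fun e _ => sum_congr rfl fun w _ => ?_
    simp [Fin.consEquiv, Fin.prod_univ_succ, List.ofFn_succ, avoids, hx]

end Paths

section InitialWord

variable {E : Type*}

-- `ω 0` is never read: the events are `u₁ = ω 1, u₂ = ω 2, …`, as in the hitting time.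
def initialWord (n : ℕ) (ω : ℕ → E) : Fin n → E := fun j => ω (j + 1)

theorem ofFn_initialWord (n : ℕ) (ω : ℕ → E) :
    List.ofFn (initialWord n ω) = (List.range n).map fun s => ω (s + 1) := by
  apply List.ext_getElem <;> simp [initialWord]

variable [MeasurableSpace E]

theorem measurable_initialWord (n : ℕ) : Measurable (initialWord (E := E) n) :=
  measurable_pi_lambda _ fun _ => measurable_pi_apply _

variable {P : Measure (ℕ → E)} [IsProbabilityMeasure P] {prob : E → ℝ≥0∞}

theorem measure_initialWord_preimage_singleton
    (hiid : ∀ (T : Finset ℕ) (u : ℕ → E), P {ω | ∀ t ∈ T, ω t = u t} = ∏ t ∈ T, prob (u t))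
    {n : ℕ} (w : Fin n → E) :
    P (initialWord n ⁻¹' {w}) = ∏ j, prob (w j) := by
  obtain ⟨ω₀⟩ := nonempty_of_isProbabilityMeasure P
  have hinj : Function.Injective fun j : Fin n => (j : ℕ) + 1 := fun i j h => by
    simpa [Fin.ext_iff] using h
  have hu := hinj.extend_apply w ω₀
  have := hiid (univ.map ⟨_, hinj⟩) (Function.extend (fun j : Fin n => (j : ℕ) + 1) w ω₀)
  simp only [prod_map, Function.Embedding.coeFn_mk, hu, mem_map, mem_univ, true_and,
    forall_exists_index, forall_apply_eq_imp_iff] at this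
  rw [← this]
  congr 1
  ext ω
  simp [initialWord, funext_iff]

theorem measure_initialWord_preimage [MeasurableSingletonClass E]
    (hiid : ∀ (T : Finset ℕ) (u : ℕ → E), P {ω | ∀ t ∈ T, ω t = u t} = ∏ t ∈ T, prob (u t))
    {n : ℕ} (W : Finset (Fin n → E)) :
    P (initialWord n ⁻¹' W) = ∑ w ∈ W, ∏ j, prob (w j) := by
  rw [← sum_measure_preimage_singleton W fun w _ =>
    measurable_initialWord n (measurableSet_singleton w)]
  exact sum_congr rfl fun w _ => measure_initialWord_preimage_singleton hiid w

theorem sum_eq_one_of_iid [Fintype E] [MeasurableSingletonClass E]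
    (hiid : ∀ (T : Finset ℕ) (u : ℕ → E), P {ω | ∀ t ∈ T, ω t = u t} = ∏ t ∈ T, prob (u t)) :
    ∑ e, prob e = 1 := by
  have := measure_initialWord_preimage hiid (n := 1) univ
  rwa [coe_univ, Set.preimage_univ, measure_univ, ← Fintype.sum_pow, pow_one, eq_comm] at this

end InitialWord

theorem sInf_natCast_eq_tsum_indicator (p : ℕ → Prop) :
    sInf {r : ℝ≥0∞ | ∃ t : ℕ, r = t ∧ p t} = ∑' n, {n | ∀ t ≤ n, ¬ p t}.indicator 1 n := by
  by_cases hp : ∃ t, p t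
  · classical
    have hset : {n | ∀ t ≤ n, ¬ p t} = Set.Iio (Nat.find hp) := by
      ext n
      simp only [Set.mem_ofPred_eq, Set.mem_Iio, Nat.lt_find_iff]
    have hinf : sInf {r : ℝ≥0∞ | ∃ t : ℕ, r = t ∧ p t} = Nat.find hp := by
      refine le_antisymm (sInf_le ⟨_, rfl, Nat.find_spec hp⟩) (le_sInf ?_)
      rintro _ ⟨t, rfl, ht⟩
      exact_mod_cast Nat.find_min' hp ht
    rw [hinf, hset, tsum_eq_sum (s := range (Nat.find hp)) (by simp)]
    rw [sum_congr rfl fun n hn =>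
      Set.indicator_of_mem (Set.mem_Iio.mpr (mem_range.mp hn)) (1 : ℕ → ℝ≥0∞)]
    simp
  · push Not at hp
    have hset : {n | ∀ t ≤ n, ¬ p t} = Set.univ := by
      ext n; simpa using fun t _ => hp t
    have hempty : {r : ℝ≥0∞ | ∃ t : ℕ, r = t ∧ p t} = ∅ := by
      ext r; simpa using fun t _ => hp t
    rw [hset, hempty, sInf_empty, Set.indicator_univ]
    exact (ENNReal.tsum_const_eq_top_of_ne_zero one_ne_zero).symm

section HittingTime

variable {σ E : Type*} {f : σ → E → σ} {Z : Set σ}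

theorem hittingTime_eq_tsum_indicator (x : σ) (ω : ℕ → E) :
    sInf {r : ℝ≥0∞ | ∃ t : ℕ, r = t ∧ iterL f x ((List.range t).map fun s => ω (s + 1)) ∈ Z}
      = ∑' n, (initialWord n ⁻¹' {w | avoids f Z x (List.ofFn w)}).indicator 1 ω := by
  classical
  rw [sInf_natCast_eq_tsum_indicator]
  refine tsum_congr fun n => ?_
  have hmem : ω ∈ initialWord n ⁻¹' {w | avoids f Z x (List.ofFn w)} ↔
      ∀ t ≤ n, iterL f x ((List.range t).map fun s => ω (s + 1)) ∉ Z := by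
    simp only [Set.mem_preimage, Set.mem_ofPred_eq, ofFn_initialWord, avoids_iff_forall_take,
      List.length_map, List.length_range]
    refine forall₂_congr fun t ht => ?_
    rw [← List.map_take, List.take_range, min_eq_left ht]
  simp only [Set.indicator_apply, Set.mem_ofPred_eq, hmem, Pi.one_apply]

theorem lintegral_hittingTime_eq_tsum_survivalProb [Fintype E] [MeasurableSpace E]
    [MeasurableSingletonClass E] {P : Measure (ℕ → E)} [IsProbabilityMeasure P]
    {prob : E → ℝ≥0∞}
    (hiid : ∀ (T : Finset ℕ) (u : ℕ → E), P {ω | ∀ t ∈ T, ω t = u t} = ∏ t ∈ T, prob (u t))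
    (x : σ) :
    ∫⁻ ω, sInf {r : ℝ≥0∞ | ∃ t : ℕ, r = t ∧
        iterL f x ((List.range t).map fun s => ω (s + 1)) ∈ Z} ∂P
      = ∑' n, survivalProb f Z prob n x := by
  classical
  have hmeas : ∀ n,
      MeasurableSet (initialWord n ⁻¹' {w : Fin n → E | avoids f Z x (List.ofFn w)}) :=
    fun n => measurable_initialWord n (Set.toFinite _).measurableSet
  simp_rw [hittingTime_eq_tsum_indicator]
  rw [lintegral_tsum fun n => (measurable_one.indicator (hmeas n)).aemeasurable]
  refine tsum_congr fun n => ?_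
  rw [lintegral_indicator_one (hmeas n), survivalProb_eq_sum, ← measure_initialWord_preimage hiid]
  congr 2
  ext w
  simp

end HittingTime

theorem sum_mul_card_eq_sum_sum_filter_mem {ι R : Type*} [Fintype ι] [DecidableEq ι]
    [CommSemiring R] (a : Finset ι → R) : ∑ A, a A * #A = ∑ i, ∑ A with i ∈ A, a A := by
  simp only [mul_comm (a _), ← nsmul_eq_mul, ← sum_const]
  exact sum_comm' fun A i => by simp

namespace GEv

variable {I : ℕ} {S : Type}

def equivSum : GEv I S ≃ Finset (Fin I) ⊕ S where
  toFun | .d A => .inl A | .s b => .inr b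
  invFun | .inl A => .d A | .inr b => .s b
  left_inv e := by cases e <;> rfl
  right_inv e := by cases e <;> rfl

instance [Fintype S] : Fintype (GEv I S) := Fintype.ofEquiv _ equivSum.symm

theorem sum_eq_add [Fintype S] {M : Type*} [AddCommMonoid M] (f : GEv I S → M) :
    ∑ e, f e = ∑ A, f (.d A) + ∑ s, f (.s s) := by
  rw [← equivSum.symm.sum_comp, Fintype.sum_sum_type]
  rfl

end GEv

section Model

variable {I : ℕ}

noncomputable def totalCount (x : Fin I → ℕ) : ℝ≥0∞ := ∑ i, (x i : ℝ≥0∞)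

def decr (x : Fin I → ℕ) (i : Fin I) : Fin I → ℕ := fun k => x k - if k = i then 1 else 0

theorem totalCount_eq_ofReal (x : Fin I → ℕ) : totalCount x = ENNReal.ofReal (∑ i, (x i : ℝ)) := by
  simp [totalCount, ENNReal.ofReal_sum_of_nonneg]

theorem totalCount_arrival_le (C x : Fin I → ℕ) (A : Finset (Fin I)) :
    totalCount (fun k => x k + if k ∈ A ∧ x k < C k then 1 else 0) ≤ totalCount x + #A := by
  simp only [totalCount, Nat.cast_add, sum_add_distrib]
  gcongr
  calc ∑ k, (((if k ∈ A ∧ x k < C k then 1 else 0 : ℕ)) : ℝ≥0∞)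
      ≤ ∑ k, if k ∈ A then 1 else 0 := by
        gcongr with k
        split_ifs <;> simp_all
    _ = #A := by simp

variable {x : Fin I → ℕ} {i : Fin I}

theorem totalCount_decr_add_one (hi : 1 ≤ x i) : totalCount (decr x i) + 1 = totalCount x := by
  calc totalCount (decr x i) + 1 = ∑ k, ((decr x i k : ℝ≥0∞) + if k = i then 1 else 0) := by
        rw [sum_add_distrib, Fintype.sum_ite_eq']
        rfl
    _ = totalCount x := sum_congr rfl fun k _ => by
        by_cases hk : k = i
        · subst hk
          simp only [decr, if_true]
          exact_mod_cast Nat.sub_add_cancel hi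
        · simp [decr, hk]

theorem decr_ne_self (hi : 1 ≤ x i) : decr x i ≠ x := fun h => by
  have := congrFun h i
  simp only [decr, if_true] at this
  omega

theorem eq_of_decr_eq {j : Fin I} (hi : 1 ≤ x i) (h : decr x i = decr x j) : i = j := by
  by_contra hij
  have := congrFun h i
  simp only [decr, if_true, if_neg hij] at this
  omega

theorem totalCount_add_sum_ite_decr {y : Fin I → ℕ}
    (hy : y = x ∨ ∃ i, 1 ≤ x i ∧ y = decr x i) :
    totalCount y + ∑ i with 1 ≤ x i, (if y = decr x i then 1 else 0) = totalCount x := by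
  rcases hy with rfl | ⟨i, hi, rfl⟩
  · rw [sum_eq_zero fun i hi => if_neg (decr_ne_self (mem_filter.mp hi).2).symm, add_zero]
  · rw [sum_eq_single_of_mem i (by simpa using hi) fun j _ hji =>
      if_neg fun h => hji (eq_of_decr_eq hi h).symm, if_pos rfl, totalCount_decr_add_one hi]

end Model

section Drift

variable {I : ℕ} {S : Type} {C : Fin I → ℕ} {g : (Fin I → ℕ) → GEv I S → (Fin I → ℕ)}
  {Λ : ℝ} {prob : GEv I S → ℝ≥0∞}

theorem transition_le_capacity
    (hgd : ∀ (x : Fin I → ℕ) (A : Finset (Fin I)),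
        g x (.d A) = fun k => x k + if k ∈ A ∧ x k < C k then 1 else 0)
    (hserv : ∀ (s : S) (x : Fin I → ℕ), x ≤ C →
        g x (.s s) = x ∨ ∃ i, 1 ≤ x i ∧ g x (.s s) = decr x i)
    {x : Fin I → ℕ} (hx : x ≤ C) (e : GEv I S) : g x e ≤ C := by
  cases e with
  | d A =>
    intro k
    rw [hgd]
    dsimp only
    split_ifs with h
    · exact h.2
    · exact hx k
  | s s =>
    rcases hserv s x hx with h | ⟨i, _, h⟩ <;> rw [h]
    · exact hx
    · exact fun k => (Nat.sub_le _ _).trans (hx k)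

theorem sum_arrival_le
    (hgd : ∀ (x : Fin I → ℕ) (A : Finset (Fin I)),
        g x (.d A) = fun k => x k + if k ∈ A ∧ x k < C k then 1 else 0)
    {lam : Finset (Fin I) → ℝ} (hlamnn : ∀ A, 0 ≤ lam A) (hΛpos : 0 < Λ)
    (hpd : ∀ A, prob (.d A) = ENNReal.ofReal (lam A / Λ)) (x : Fin I → ℕ) :
    ∑ A, prob (.d A) * totalCount (g x (.d A))
      ≤ (∑ A, prob (.d A)) * totalCount x
        + ENNReal.ofReal ((∑ i, ∑ A with i ∈ A, lam A) / Λ) := by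
  have hrate : ENNReal.ofReal ((∑ i, ∑ A with i ∈ A, lam A) / Λ) = ∑ A, prob (.d A) * #A := by
    have hnn : ∀ A, 0 ≤ lam A * #A / Λ := fun A =>
      div_nonneg (mul_nonneg (hlamnn A) (Nat.cast_nonneg _)) hΛpos.le
    rw [← sum_mul_card_eq_sum_sum_filter_mem, sum_div,
      ENNReal.ofReal_sum_of_nonneg fun A _ => hnn A]
    refine sum_congr rfl fun A _ => ?_
    rw [hpd, mul_div_right_comm, ENNReal.ofReal_mul (div_nonneg (hlamnn A) hΛpos.le),
      ENNReal.ofReal_natCast]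
  rw [hrate, sum_mul, ← sum_add_distrib]
  gcongr with A
  rw [← mul_add, hgd]
  exact mul_le_mul_right (totalCount_arrival_le C x A) _

theorem sum_service_add_ofReal_eq [Fintype S]
    (hserv : ∀ (s : S) (x : Fin I → ℕ), x ≤ C →
        g x (.s s) = x ∨ ∃ i, 1 ≤ x i ∧ g x (.s s) = decr x i)
    {μ : Fin I → (Fin I → ℕ) → ℝ}
    (hμ0 : ∀ i, ∀ x ≤ C, x i = 0 → μ i x = 0) (hμnn : ∀ i, ∀ x ≤ C, 0 ≤ μ i x) (hΛpos : 0 < Λ)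
    (hps : ∀ x ≤ C, ∀ i, 1 ≤ x i →
        ∑ s with g x (.s s) = decr x i, prob (.s s) = ENNReal.ofReal (μ i x / Λ))
    {x : Fin I → ℕ} (hx : x ≤ C) :
    ∑ s, prob (.s s) * totalCount (g x (.s s)) + ENNReal.ofReal ((∑ i, μ i x) / Λ)
      = (∑ s, prob (.s s)) * totalCount x := by
  classical
  have hrate : ENNReal.ofReal ((∑ i, μ i x) / Λ)
      = ∑ i with 1 ≤ x i, ∑ s, prob (.s s) * if g x (.s s) = decr x i then 1 else 0 := by
    rw [sum_div, ← sum_filter_of_ne fun i _ hi => Nat.one_le_iff_ne_zero.mpr fun h0 => by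
      simp [hμ0 i x hx h0] at hi]
    rw [ENNReal.ofReal_sum_of_nonneg fun i _ => div_nonneg (hμnn i x hx) hΛpos.le]
    refine sum_congr rfl fun i hi => ?_
    rw [← hps x hx i (mem_filter.mp hi).2, sum_filter]
    simp only [mul_ite, mul_one, mul_zero]
  rw [hrate, sum_comm, ← sum_add_distrib, sum_mul]
  refine sum_congr rfl fun s _ => ?_
  rw [← mul_sum, ← mul_add, totalCount_add_sum_ite_decr (hserv s x hx)]

theorem drift_totalCount [Fintype S]
    (hgd : ∀ (x : Fin I → ℕ) (A : Finset (Fin I)),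
        g x (.d A) = fun k => x k + if k ∈ A ∧ x k < C k then 1 else 0)
    (hserv : ∀ (s : S) (x : Fin I → ℕ), x ≤ C →
        g x (.s s) = x ∨ ∃ i, 1 ≤ x i ∧ g x (.s s) = decr x i)
    {μ : Fin I → (Fin I → ℕ) → ℝ}
    (hμ0 : ∀ i, ∀ x ≤ C, x i = 0 → μ i x = 0) (hμnn : ∀ i, ∀ x ≤ C, 0 ≤ μ i x)
    {lam : Finset (Fin I) → ℝ} (hlamnn : ∀ A, 0 ≤ lam A) (hΛpos : 0 < Λ)
    (hpd : ∀ A, prob (.d A) = ENNReal.ofReal (lam A / Λ))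
    (hps : ∀ x ≤ C, ∀ i, 1 ≤ x i →
        ∑ s with g x (.s s) = decr x i, prob (.s s) = ENNReal.ofReal (μ i x / Λ))
    (htot : ∑ e, prob e = 1) {δ : ℝ} (hδ : 0 ≤ δ) {x : Fin I → ℕ} (hx : x ≤ C)
    (hgap : δ + ∑ i, ∑ A with i ∈ A, lam A ≤ ∑ i, μ i x) :
    ENNReal.ofReal (δ / Λ) + ∑ e, prob e * totalCount (g x e) ≤ totalCount x := by
  set L := ENNReal.ofReal ((∑ i, ∑ A with i ∈ A, lam A) / Λ)
  set M := ENNReal.ofReal ((∑ i, μ i x) / Λ)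
  have hLM : ENNReal.ofReal (δ / Λ) + L ≤ M := by
    have hlam : 0 ≤ ∑ i, ∑ A with i ∈ A, lam A :=
      sum_nonneg fun i _ => sum_nonneg fun A _ => hlamnn A
    rw [← ENNReal.ofReal_add (div_nonneg hδ hΛpos.le) (div_nonneg hlam hΛpos.le), ← add_div]
    exact ENNReal.ofReal_le_ofReal (div_le_div_of_nonneg_right hgap hΛpos.le)
  have hone : ∑ A, prob (.d A) + ∑ s, prob (.s s) = 1 := by rw [← GEv.sum_eq_add, htot]
  refine (ENNReal.add_le_add_iff_right (ENNReal.ofReal_ne_top : M ≠ ⊤)).mp ?_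
  calc ENNReal.ofReal (δ / Λ) + ∑ e, prob e * totalCount (g x e) + M
      = ENNReal.ofReal (δ / Λ) + ∑ A, prob (.d A) * totalCount (g x (.d A))
          + (∑ s, prob (.s s) * totalCount (g x (.s s)) + M) := by
        rw [GEv.sum_eq_add]
        ring
    _ ≤ ENNReal.ofReal (δ / Λ) + ((∑ A, prob (.d A)) * totalCount x + L)
          + (∑ s, prob (.s s)) * totalCount x := by
        rw [sum_service_add_ofReal_eq hserv hμ0 hμnn hΛpos hps hx]
        gcongr
        exact sum_arrival_le hgd hlamnn hΛpos hpd x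
    _ = ENNReal.ofReal (δ / Λ) + L + (∑ A, prob (.d A) + ∑ s, prob (.s s)) * totalCount x := by
        ring
    _ ≤ M + totalCount x := by
        rw [hone, one_mul]
        gcongr
    _ = totalCount x + M := add_comm _ _

end Drift

theorem stmt17_general (I : ℕ) (C : Fin I → ℕ)
    (S : Type) [Fintype S]
    (g : (Fin I → ℕ) → GEv I S → (Fin I → ℕ))
    -- arrivals
    (hgd : ∀ (x : Fin I → ℕ) (A : Finset (Fin I)),
        g x (.d A) = fun k => x k + if k ∈ A ∧ x k < C k then 1 else 0)
    -- each service either does nothing or removes one item of some type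
    (hserv : ∀ (s : S) (x : Fin I → ℕ), (∀ i, x i ≤ C i) →
        g x (.s s) = x ∨ ∃ i, 1 ≤ x i ∧ g x (.s s) = fun k => x k - if k = i then 1 else 0)
    -- service rates
    (μ : Fin I → (Fin I → ℕ) → ℝ)
    (hμ0 : ∀ (i : Fin I) (x : Fin I → ℕ), (∀ k, x k ≤ C k) → x i = 0 → μ i x = 0)
    (hμnn : ∀ (i : Fin I) (x : Fin I → ℕ), (∀ k, x k ≤ C k) → 0 ≤ μ i x)
    -- arrival rates and the uniformization constant
    (lam : Finset (Fin I) → ℝ) (hlamnn : ∀ A, 0 ≤ lam A)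
    (Λ : ℝ) (hΛpos : 0 < Λ)
    -- the distribution `ν` on events
    (prob : GEv I S → ℝ≥0∞)
    (hpd : ∀ A : Finset (Fin I), prob (.d A) = ENNReal.ofReal (lam A / Λ))
    (hps : ∀ (x : Fin I → ℕ), (∀ k, x k ≤ C k) → ∀ i : Fin I, 1 ≤ x i →
        (∑ s ∈ Finset.univ.filter
            (fun s : S => g x (.s s) = fun k => x k - if k = i then 1 else 0),
          prob (.s s)) = ENNReal.ofReal (μ i x / Λ))
    -- i.i.d. events with law `ν`
    (P : Measure (ℕ → GEv I S)) [IsProbabilityMeasure P]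
    (hiid : ∀ (T : Finset ℕ) (u : ℕ → GEv I S),
        P {ω | ∀ t ∈ T, ω t = u t} = ∏ t ∈ T, prob (u t))
    -- drift condition
    (mv δ : ℝ)
    (hmv : IsLeast {v : ℝ | ∃ x : Fin I → ℕ, (∀ k, x k ≤ C k) ∧ x ≠ 0 ∧ v = ∑ i, μ i x} mv)
    (hδ : δ = mv - ∑ i : Fin I, ∑ A ∈ Finset.univ.filter (fun A => i ∈ A), lam A)
    (hδpos : 0 < δ) :
    ∫⁻ ω, sInf {r : ℝ≥0∞ | ∃ t : ℕ, r = t ∧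
        iterL g (fun i => C i) ((List.range t).map fun s => ω (s + 1)) = 0} ∂P
      ≤ ENNReal.ofReal (Λ / δ * ∑ i, (C i : ℝ)) := by
  have hδΛ : 0 < δ / Λ := div_pos hδpos hΛpos
  have hbound : ENNReal.ofReal (δ / Λ) * ∑' n, survivalProb g {0} prob n C ≤ totalCount C :=
    mul_tsum_survivalProb_le (X := Set.Iic C) (fun _ hx e => transition_le_capacity hgd hserv hx e)
      (fun x hx hx0 => drift_totalCount hgd hserv hμ0 hμnn hlamnn hΛpos hpd hps
        (sum_eq_one_of_iid hiid) hδpos.le hx (by linarith [hmv.2 ⟨x, hx, hx0, rfl⟩]))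
      Set.self_mem_Iic
  calc _ = ∑' n, survivalProb g {0} prob n C := lintegral_hittingTime_eq_tsum_survivalProb hiid C
    _ ≤ totalCount C / ENNReal.ofReal (δ / Λ) :=
        (ENNReal.le_div_iff_mul_le (Or.inl (by simpa using hδΛ)) (Or.inl ENNReal.ofReal_ne_top)).mpr
          (by rwa [mul_comm])
    _ = ENNReal.ofReal (Λ / δ * ∑ i, (C i : ℝ)) := by
        rw [totalCount_eq_ofReal, ← ENNReal.ofReal_div_of_pos hδΛ]
        congr 1
        field_simp

/-- Proposition B.1: hitting time to zero for the generalized ATO-POS system with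
monotone state-dependent services. -/
theorem stmt17 (I : ℕ) (hI : 1 ≤ I) (C : Fin I → ℕ) (hC : ∀ i, 1 ≤ C i)
    (S : Type) [Fintype S]
    (g : (Fin I → ℕ) → GEv I S → (Fin I → ℕ))
    -- arrivals
    (hgd : ∀ (x : Fin I → ℕ) (A : Finset (Fin I)),
        g x (.d A) = fun k => x k + if k ∈ A ∧ x k < C k then 1 else 0)
    -- services are monotone on `X`
    (hmono : ∀ (s : S) (x y : Fin I → ℕ), (∀ i, x i ≤ C i) → (∀ i, y i ≤ C i) →
        x ≤ y → g x (.s s) ≤ g y (.s s))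
    -- each service either does nothing or removes one item of some type
    (hserv : ∀ (s : S) (x : Fin I → ℕ), (∀ i, x i ≤ C i) →
        g x (.s s) = x ∨ ∃ i, 1 ≤ x i ∧ g x (.s s) = fun k => x k - if k = i then 1 else 0)
    -- service rates
    (μ : Fin I → (Fin I → ℕ) → ℝ)
    (hμ0 : ∀ (i : Fin I) (x : Fin I → ℕ), (∀ k, x k ≤ C k) → x i = 0 → μ i x = 0)
    (hμnn : ∀ (i : Fin I) (x : Fin I → ℕ), (∀ k, x k ≤ C k) → 0 ≤ μ i x)
    (νm : Fin I → ℝ) (hνm : ∀ i, IsGreatest ((μ i) '' {x | ∀ k, x k ≤ C k}) (νm i))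
    -- arrival rates and the uniformization constant
    (lam : Finset (Fin I) → ℝ) (hlamnn : ∀ A, 0 ≤ lam A) (hlam0 : lam ∅ = 0)
    (Λ : ℝ) (hΛ : Λ = (∑ A : Finset (Fin I), lam A) + ∑ i, νm i) (hΛpos : 0 < Λ)
    -- the distribution `ν` on events
    (prob : GEv I S → ℝ≥0∞)
    (hpd : ∀ A : Finset (Fin I), prob (.d A) = ENNReal.ofReal (lam A / Λ))
    (hps : ∀ (x : Fin I → ℕ), (∀ k, x k ≤ C k) → ∀ i : Fin I, 1 ≤ x i →
        (∑ s ∈ Finset.univ.filter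
            (fun s : S => g x (.s s) = fun k => x k - if k = i then 1 else 0),
          prob (.s s)) = ENNReal.ofReal (μ i x / Λ))
    -- i.i.d. events with law `ν`
    (P : Measure (ℕ → GEv I S)) [IsProbabilityMeasure P]
    (hiid : ∀ (T : Finset ℕ) (u : ℕ → GEv I S),
        P {ω | ∀ t ∈ T, ω t = u t} = ∏ t ∈ T, prob (u t))
    -- drift condition
    (mv δ : ℝ)
    (hmv : IsLeast {v : ℝ | ∃ x : Fin I → ℕ, (∀ k, x k ≤ C k) ∧ x ≠ 0 ∧ v = ∑ i, μ i x} mv)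
    (hδ : δ = mv - ∑ i : Fin I, ∑ A ∈ Finset.univ.filter (fun A => i ∈ A), lam A)
    (hδpos : 0 < δ) :
    ∫⁻ ω, sInf {r : ℝ≥0∞ | ∃ t : ℕ, r = t ∧
        iterL g (fun i => C i) ((List.range t).map fun s => ω (s + 1)) = 0} ∂P
      ≤ ENNReal.ofReal (Λ / δ * ∑ i, (C i : ℝ)) :=
  stmt17_general I C S g hgd hserv μ hμ0 hμnn lam hlamnn Λ hΛpos prob hpd hps P hiid mv δ hmv hδ
    hδpos


end ATO
end

section
/- Hitting time to zero for the supremum chain (Lemma C.1): assume μ > Σ_{i=1}^I λ_i. Let τ̄ = min{t ≥ 0 : f̄(C, u_1⋯u_t) = 0} be the hitting time of the zero state for the supremum chain started from the full state C = (C_1,…,C_I) (where f̄(x, w) denotes iterated application along the word w, u_1 first). Then E[τ̄] ≤ Λ|C|/(μ − Σ_{i=1}^I λ_i). -/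
open MeasureTheory Finset ENNReal

namespace ATO

/-!
The total number of items `|x| = ∑ p, x p` is a Lyapunov function for the supremum chain. An
arrival `d_A` raises it by at most `|A|`, no return raises it, and the return `r_1^i` at the first
nonzero coordinate `i` of `x` lowers it by one: in every detailed state projecting to `x`, a set
containing `i` cannot contain a smaller index, so it is one of the `A_k^i` and the return finds an
item to remove. Off zero the expected decrease is therefore at least `δ = (μ - ∑ λ_i) / Λ`, and
the additive drift argument (`|X_{t ∧ τ}| + δ (t ∧ τ)` is a supermartingale) gives
`δ E[τ] ≤ |C|`.
-/

open Classical in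
theorem sInf_setOf_natCast_eq_tsum (p : ℕ → Prop) :
    sInf {r : ℝ≥0∞ | ∃ t : ℕ, r = t ∧ p t} = ∑' t : ℕ, if ∀ s ≤ t, ¬ p s then 1 else 0 := by
  by_cases h : ∃ t, p t
  · simp only [← Nat.lt_find_iff h]
    rw [tsum_eq_sum (s := range (Nat.find h)) (by simp)]
    simp only [← mem_range, sum_ite_mem, inter_self, sum_const, card_range, nsmul_one]
    refine le_antisymm (sInf_le ⟨_, rfl, Nat.find_spec h⟩) (le_sInf ?_)
    rintro _ ⟨t, rfl, ht⟩
    exact_mod_cast Nat.find_min' h ht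
  · simp only [not_exists] at h
    simp [h]

theorem apply_sInf_ne_zero {a : ℕ → ℕ} {l : ℕ} (hl : a l ≠ 0) :
    a (sInf {k | 1 ≤ ∑ m ∈ range (k + 1), a m}) ≠ 0 := by
  set k₀ := sInf {k | 1 ≤ ∑ m ∈ range (k + 1), a m}
  have hmem : 1 ≤ ∑ m ∈ range (k₀ + 1), a m :=
    Nat.sInf_mem (s := {k | 1 ≤ ∑ m ∈ range (k + 1), a m})
      ⟨l, (Nat.one_le_iff_ne_zero.2 hl).trans
        (single_le_sum (fun _ _ => Nat.zero_le _) (self_mem_range_succ l))⟩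
  intro h0
  rw [sum_range_succ, h0, add_zero] at hmem
  rcases Nat.eq_zero_or_pos k₀ with hk | hk
  · simp [hk] at hmem
  · have hprev : k₀ - 1 ∈ {k | 1 ≤ ∑ m ∈ range (k + 1), a m} := by
      simpa [Nat.sub_add_cancel hk] using hmem
    exact (Nat.sInf_le hprev).not_gt (Nat.sub_lt hk one_pos)

theorem testBit_sum_two_pow {s : Finset ℕ} {b : ℕ} :
    (∑ k ∈ s, 2 ^ k).testBit b = true ↔ b ∈ s := by
  rw [← Nat.mem_bitIndices, ← List.mem_toFinset, Finset.toFinset_bitIndices_sum_two_pow]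

theorem exists_ne_zero_forall_lt_eq_zero {ι M : Type*} [LinearOrder ι] [WellFoundedLT ι]
    [Zero M] {x : ι → M} (hx : x ≠ 0) : ∃ i, x i ≠ 0 ∧ ∀ t < i, x t = 0 := by
  obtain ⟨i, hi, hmin⟩ := wellFounded_lt.has_min {i | x i ≠ 0} (Function.ne_iff.1 hx)
  exact ⟨i, hi, fun t ht => by_contra fun h => hmin t h ht⟩

def IsIIDLaw {E : Type*} [MeasurableSpace E] (P : Measure (ℕ → E)) (ν : E → ℝ≥0∞) : Prop :=
  ∀ (T : Finset ℕ) (u : ℕ → E), P {ω | ∀ t ∈ T, ω t = u t} = ∏ t ∈ T, ν (u t)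

def firstLetters {E : Type*} (ω : ℕ → E) (k : ℕ) : Fin k → E := fun s => ω (s + 1)

theorem measurable_firstLetters {E : Type*} [MeasurableSpace E] (k : ℕ) :
    Measurable fun ω : ℕ → E => firstLetters ω k :=
  measurable_pi_lambda _ fun _ => measurable_pi_apply _

namespace IsIIDLaw

variable {E : Type*} [MeasurableSpace E] [Nonempty E] {P : Measure (ℕ → E)} {ν : E → ℝ≥0∞}

theorem isProbabilityMeasure (hP : IsIIDLaw P ν) : IsProbabilityMeasure P :=
  ⟨by simpa using hP ∅ fun _ => Classical.arbitrary E⟩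

theorem measure_firstLetters_eq (hP : IsIIDLaw P ν) {k : ℕ} (v : Fin k → E) :
    P {ω | firstLetters ω k = v} = ∏ s, ν (v s) := by
  classical
  let u : ℕ → E := fun t => if h : t - 1 < k then v ⟨t - 1, h⟩ else Classical.arbitrary E
  have hset : {ω | firstLetters ω k = v}
      = {ω | ∀ t ∈ (range k).map (addRightEmbedding 1), ω t = u t} := by
    ext ω
    simp +contextual [firstLetters, funext_iff, u, Fin.forall_iff]
  rw [hset, hP, prod_map, ← Fin.prod_univ_eq_prod_range]
  simp [u]

variable [MeasurableSingletonClass E] [Countable E]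

theorem lintegral_comp_firstLetters (hP : IsIIDLaw P ν) {k : ℕ} (G : (Fin k → E) → ℝ≥0∞) :
    ∫⁻ ω, G (firstLetters ω k) ∂P = ∑' v, G v * ∏ s, ν (v s) := by
  rw [← lintegral_map (measurable_of_countable G) (measurable_firstLetters k),
    lintegral_countable']
  refine tsum_congr fun v => ?_
  rw [Measure.map_apply (measurable_firstLetters k) (measurableSet_singleton v)]
  exact congrArg _ (hP.measure_firstLetters_eq v)

theorem lintegral_comp_firstLetters_succ (hP : IsIIDLaw P ν) {k : ℕ}
    (G : (Fin k → E) → E → ℝ≥0∞) :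
    ∫⁻ ω, G (firstLetters ω k) (ω (k + 1)) ∂P
      = ∫⁻ ω, ∑' e, ν e * G (firstLetters ω k) e ∂P := by
  refine (hP.lintegral_comp_firstLetters fun v : Fin (k + 1) → E =>
    G (Fin.init v) (v (Fin.last k))).trans (Eq.trans ?_
      (hP.lintegral_comp_firstLetters fun w => ∑' e, ν e * G w e).symm)
  rw [← (Fin.snocEquiv fun _ => E).tsum_eq, ENNReal.tsum_prod', ENNReal.tsum_comm]
  refine tsum_congr fun w => ?_
  simp only [Fin.snocEquiv, Equiv.coe_fn_mk, Fin.init_snoc, Fin.snoc_last,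
    Fin.prod_univ_castSucc, Fin.snoc_castSucc, ← ENNReal.tsum_mul_right]
  exact tsum_congr fun e => by ring

theorem tsum_eq_one (hP : IsIIDLaw P ν) : ∑' e, ν e = 1 := by
  have := hP.isProbabilityMeasure
  have h := hP.lintegral_comp_firstLetters (k := 1) fun _ => 1
  rw [lintegral_const, measure_univ, ← (Equiv.funUnique (Fin 1) E).symm.tsum_eq] at h
  simpa using h.symm

end IsIIDLaw

section Words

variable {E σ : Type*}

def prefixWord (ω : ℕ → E) (t : ℕ) : List E := (List.range t).map fun s => ω (s + 1)

theorem prefixWord_succ (ω : ℕ → E) (t : ℕ) :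
    prefixWord ω (t + 1) = prefixWord ω t ++ [ω (t + 1)] := by
  simp [prefixWord, List.range_succ]

theorem take_prefixWord (ω : ℕ → E) (s t : ℕ) :
    (prefixWord ω t).take s = prefixWord ω (min s t) := by
  rw [prefixWord, ← List.map_take, List.take_range, prefixWord]

theorem prefixWord_eq_ofFn (ω : ℕ → E) (t : ℕ) :
    prefixWord ω t = List.ofFn (firstLetters ω t) := by
  simp [prefixWord, firstLetters, List.ofFn_eq_map, ← List.map_coe_finRange_eq_range,
    List.map_map]

def Survives (f : σ → E → σ) (x₀ : σ) (S : Set σ) (w : List E) : Prop :=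
  ∀ s, (w.take s).foldl f x₀ ∉ S

variable {f : σ → E → σ} {x₀ : σ} {S : Set σ}

theorem Survives.of_append {w v : List E} (h : Survives f x₀ S (w ++ v)) :
    Survives f x₀ S w := by
  intro s
  have := h (min s w.length)
  rwa [List.take_append, Nat.sub_eq_zero_of_le (min_le_right _ _), List.take_zero,
    List.append_nil, ← List.take_eq_take_min] at this

theorem survives_prefixWord_iff {ω : ℕ → E} {t : ℕ} :
    Survives f x₀ S (prefixWord ω t) ↔ ∀ s ≤ t, (prefixWord ω s).foldl f x₀ ∉ S := by
  simp only [Survives, take_prefixWord]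
  exact ⟨fun h s hs => min_eq_left hs ▸ h s, fun h s => h _ (min_le_right s t)⟩

theorem foldl_mem {K : Set σ} (hK : ∀ x ∈ K, ∀ e, f x e ∈ K) :
    ∀ (w : List E) {x : σ}, x ∈ K → w.foldl f x ∈ K
  | [], _, hx => hx
  | e :: w, _, hx => foldl_mem hK w (hK _ hx e)

end Words

section HittingTime

variable {E σ : Type*} [MeasurableSpace E] [MeasurableSingletonClass E] [Countable E]

open Classical in
theorem measurable_ite_survives (f : σ → E → σ) (x₀ : σ) (S : Set σ) (t : ℕ) (c : ℝ≥0∞) :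
    Measurable fun ω : ℕ → E => if Survives f x₀ S (prefixWord ω t) then c else 0 := by
  simp only [prefixWord_eq_ofFn]
  exact (measurable_of_countable fun w : Fin t → E =>
    if Survives f x₀ S (List.ofFn w) then c else 0).comp (measurable_firstLetters t)

variable [Nonempty E] {P : Measure (ℕ → E)} {ν : E → ℝ≥0∞}
  {f : σ → E → σ} {V : σ → ℝ≥0∞} {K S : Set σ} {x₀ : σ} {δ : ℝ≥0∞}

open Classical in
theorem lintegral_survives_mul_succ_add_le (hP : IsIIDLaw P ν) (hK : ∀ x ∈ K, ∀ e, f x e ∈ K)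
    (hx₀ : x₀ ∈ K) (hdrift : ∀ x ∈ K, x ∉ S → ∑' e, ν e * V (f x e) + δ ≤ V x) (t : ℕ) :
    ∫⁻ ω, (if Survives f x₀ S (prefixWord ω (t + 1)) then 1 else 0)
        * V ((prefixWord ω (t + 1)).foldl f x₀) ∂P
      + δ * ∫⁻ ω, (if Survives f x₀ S (prefixWord ω t) then 1 else 0) ∂P
      ≤ ∫⁻ ω, (if Survives f x₀ S (prefixWord ω t) then 1 else 0)
        * V ((prefixWord ω t).foldl f x₀) ∂P := by
  set a : (ℕ → E) → ℝ≥0∞ := fun ω => if Survives f x₀ S (prefixWord ω t) then 1 else 0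
  have hnext : ∫⁻ ω, (if Survives f x₀ S (prefixWord ω (t + 1)) then 1 else 0)
        * V ((prefixWord ω (t + 1)).foldl f x₀) ∂P
      ≤ ∫⁻ ω, a ω * V (f ((prefixWord ω t).foldl f x₀) (ω (t + 1))) ∂P := by
    refine lintegral_mono fun ω => ?_
    rw [prefixWord_succ, List.foldl_append, List.foldl_cons, List.foldl_nil]
    gcongr
    by_cases h : Survives f x₀ S (prefixWord ω t ++ [ω (t + 1)])
    · simp [a, h, h.of_append]
    · simp [h]
  have hindep : ∫⁻ ω, a ω * V (f ((prefixWord ω t).foldl f x₀) (ω (t + 1))) ∂P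
      = ∫⁻ ω, a ω * ∑' e, ν e * V (f ((prefixWord ω t).foldl f x₀) e) ∂P := by
    simp only [a, prefixWord_eq_ofFn]
    rw [hP.lintegral_comp_firstLetters_succ fun w e =>
      (if Survives f x₀ S (List.ofFn w) then 1 else 0) * V (f ((List.ofFn w).foldl f x₀) e)]
    simp_rw [mul_left_comm _ (ite _ _ _), ENNReal.tsum_mul_left]
  have hdrop : ∀ ω, a ω * ∑' e, ν e * V (f ((prefixWord ω t).foldl f x₀) e) + δ * a ω
      ≤ a ω * V ((prefixWord ω t).foldl f x₀) := by
    intro ω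
    by_cases h : Survives f x₀ S (prefixWord ω t)
    · have hS := h t
      rw [List.take_of_length_le (by simp [prefixWord])] at hS
      simpa [a, h] using hdrift _ (foldl_mem hK _ hx₀) hS
    · simp [a, h]
  calc _ ≤ ∫⁻ ω, a ω * ∑' e, ν e * V (f ((prefixWord ω t).foldl f x₀) e) ∂P
          + ∫⁻ ω, δ * a ω ∂P := add_le_add (hnext.trans_eq hindep) (lintegral_const_mul_le _ _)
    _ ≤ _ := (le_lintegral_add _ _).trans (lintegral_mono hdrop)

open Classical in
theorem mul_lintegral_hittingTime_le (hP : IsIIDLaw P ν) (hK : ∀ x ∈ K, ∀ e, f x e ∈ K)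
    (hx₀ : x₀ ∈ K) (hdrift : ∀ x ∈ K, x ∉ S → ∑' e, ν e * V (f x e) + δ ≤ V x) :
    δ * ∫⁻ ω, sInf {r : ℝ≥0∞ | ∃ t : ℕ, r = t ∧ (prefixWord ω t).foldl f x₀ ∈ S} ∂P
      ≤ V x₀ := by
  have := hP.isProbabilityMeasure
  set a : ℕ → (ℕ → E) → ℝ≥0∞ := fun t ω => if Survives f x₀ S (prefixWord ω t) then 1 else 0
  have htelescope : ∀ T, δ * ∑ t ∈ range T, ∫⁻ ω, a t ω ∂P
      + ∫⁻ ω, a T ω * V ((prefixWord ω T).foldl f x₀) ∂P ≤ V x₀ := by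
    intro T
    induction T with
    | zero =>
      have ha : ∀ ω, a 0 ω ≤ 1 := fun ω => by simp only [a]; split_ifs <;> simp
      simpa [prefixWord] using
        lintegral_mono (μ := P) fun ω => mul_le_of_le_one_left (zero_le (a := V x₀)) (ha ω)
    | succ T ih =>
      rw [sum_range_succ, mul_add, add_assoc]
      refine le_trans ?_ ih
      gcongr
      rw [add_comm]
      exact lintegral_survives_mul_succ_add_le hP hK hx₀ hdrift T
  have hτ : ∀ ω, sInf {r : ℝ≥0∞ | ∃ t : ℕ, r = t ∧ (prefixWord ω t).foldl f x₀ ∈ S}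
      = ∑' t, a t ω := by
    intro ω
    simp only [sInf_setOf_natCast_eq_tsum, a, survives_prefixWord_iff]
  calc δ * ∫⁻ ω, sInf {r : ℝ≥0∞ | ∃ t : ℕ, r = t ∧ (prefixWord ω t).foldl f x₀ ∈ S} ∂P
      = ⨆ T, δ * ∑ t ∈ range T, ∫⁻ ω, a t ω ∂P := by
        simp_rw [hτ]
        rw [lintegral_tsum fun t => (measurable_ite_survives f x₀ S t 1).aemeasurable,
          ENNReal.tsum_eq_iSup_nat, ENNReal.mul_iSup]
    _ ≤ V x₀ := iSup_le fun T => le_self_add.trans (htelescope T)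

end HittingTime

instance (I : ℕ) : Countable (Ev I) := by
  have hinj : Function.Injective fun e : Ev I => match e with
    | .d A => (Sum.inl A : Finset (Fin I) ⊕ Fin I × ℕ)
    | .s i j => Sum.inr (i, j) := by
    rintro (_ | _) (_ | _) h <;> simp_all
  exact hinj.countable

instance (I : ℕ) : MeasurableSingletonClass (Ev I) :=
  ⟨fun _ => MeasurableSpace.measurableSet_top⟩

instance (I : ℕ) : Nonempty (Ev I) := ⟨.d ∅⟩

theorem iter_eq_foldl {I : ℕ} {σ : Type*} (f : σ → Ev I → σ) (x : σ) (w : List (Ev I)) :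
    iter f x w = w.foldl f x := by
  induction w generalizing x with
  | nil => rfl
  | cons a w ih => exact ih (f x a)

section Chain

variable {I : ℕ} {C : Fin I → ℕ}

theorem fbar_le_of_forall {x : Fin I → ℕ} {a : Ev I} {p : Fin I} {m : ℕ}
    (h : ∀ n, psi n = x → psi (ftil C n a) p ≤ m) : fbar C x a p ≤ m :=
  csSup_le' <| by
    rintro _ ⟨n, ⟨-, hn⟩, rfl⟩
    exact h n hn

theorem psi_ftil_d_le (n : Finset (Fin I) → ℕ) (A : Finset (Fin I)) (p : Fin I) :
    psi (ftil C n (.d A)) p ≤ psi n p + if p ∈ A ∧ psi n p < C p then 1 else 0 := by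
  classical
  set B := A.filter fun i => psi n i < C i
  simp only [psi, ftil, sum_add_distrib]
  gcongr
  calc ∑ S ∈ univ.filter (p ∈ ·), (if S = B ∧ S.Nonempty then 1 else 0)
      ≤ ∑ S ∈ univ.filter (p ∈ ·), if S = B then 1 else 0 :=
        sum_le_sum fun S _ => by split_ifs <;> simp_all
    _ = _ := by rw [sum_ite_eq']; simp only [B, mem_filter, mem_univ, true_and]; rfl

theorem psi_ftil_s_le (n : Finset (Fin I) → ℕ) (i : Fin I) (j : ℕ) (p : Fin I) :
    psi (ftil C n (.s i j)) p ≤ psi n p :=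
  sum_le_sum fun _ _ => Nat.sub_le _ _

theorem exists_Aset_eq {i : Fin I} {A : Finset (Fin I)} (hiA : i ∈ A)
    (hmin : ∀ t ∈ A, i ≤ t) : ∃ l < 2 ^ (I - 1 - i), Aset i l = A := by
  classical
  let bits : Finset ℕ :=
    (univ.filter fun t : Fin I => i < t ∧ t ∉ A).image fun t => I - 1 - t.val
  refine ⟨∑ b ∈ bits, 2 ^ b, Nat.geomSum_lt le_rfl ?_, ?_⟩
  · simp only [bits, mem_image, mem_filter, mem_univ, true_and]
    rintro _ ⟨t, ⟨hit, -⟩, rfl⟩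
    have : (i : ℕ) < t := hit
    omega
  · ext t
    rw [Aset, mem_filter, Bool.eq_false_iff, Ne, testBit_sum_two_pow]
    have hinj : ∀ a : Fin I, I - 1 - a.val = I - 1 - t.val ↔ a = t := fun a => by
      rw [Fin.ext_iff]; omega
    simp only [mem_univ, true_and, bits, mem_image, mem_filter, hinj, exists_eq_right]
    rcases lt_trichotomy t i with hti | rfl | hit
    · simp only [hti.ne, hti.not_gt, false_and, or_false, false_iff]
      exact fun htA => (hmin t htA).not_gt hti
    · simpa using hiA
    · simp [hit, hit.ne']

theorem exists_Aset_ne_zero {n : Finset (Fin I) → ℕ} {i : Fin I} (hi : psi n i ≠ 0)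
    (hlt : ∀ t < i, psi n t = 0) : ∃ l < 2 ^ (I - 1 - i), n (Aset i l) ≠ 0 := by
  obtain ⟨A, hA, hnA⟩ := exists_ne_zero_of_sum_ne_zero hi
  have hmin : ∀ t ∈ A, i ≤ t := fun t htA => not_lt.1 fun hti => hnA <| Nat.eq_zero_of_le_zero <|
    hlt t hti ▸ single_le_sum (fun _ _ => Nat.zero_le _) (mem_filter.2 ⟨mem_univ A, htA⟩)
  obtain ⟨l, hl, rfl⟩ := exists_Aset_eq (mem_filter.1 hA).2 hmin
  exact ⟨l, hl, hnA⟩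

theorem psi_ftil_s_lt {n : Finset (Fin I) → ℕ} {i : Fin I} {l : ℕ} (hl : l < 2 ^ (I - 1 - i))
    (hn : n (Aset i l) ≠ 0) : psi (ftil C n (.s i 1)) i < psi n i := by
  have htot : 1 ≤ psum i n (2 ^ (I - 1 - i)) :=
    (Nat.one_le_iff_ne_zero.2 hn).trans
      (single_le_sum (f := fun l => n (Aset i l)) (fun _ _ => Nat.zero_le _) (mem_range.2 hl))
  have hk₀ := apply_sInf_ne_zero (a := fun l => n (Aset i l)) hn
  refine sum_lt_sum (fun _ _ => Nat.sub_le _ _)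
    ⟨Aset i (sInf {k | 1 ≤ psum i n (k + 1)}), by simp [Aset], ?_⟩
  simp only [ftil, htot, true_and, if_true]
  exact Nat.sub_lt (Nat.pos_of_ne_zero hk₀) one_pos

theorem fbar_d_le (x : Fin I → ℕ) (A : Finset (Fin I)) (p : Fin I) :
    fbar C x (.d A) p ≤ x p + if p ∈ A ∧ x p < C p then 1 else 0 :=
  fbar_le_of_forall fun n hn => hn ▸ psi_ftil_d_le n A p

theorem fbar_s_le (x : Fin I → ℕ) (i : Fin I) (j : ℕ) (p : Fin I) :
    fbar C x (.s i j) p ≤ x p :=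
  fbar_le_of_forall fun n hn => hn ▸ psi_ftil_s_le n i j p

theorem fbar_s_lt {x : Fin I → ℕ} {i : Fin I} (hi : x i ≠ 0) (hlt : ∀ t < i, x t = 0) :
    fbar C x (.s i 1) i < x i := by
  refine Nat.lt_of_le_sub_one (Nat.pos_of_ne_zero hi) (fbar_le_of_forall fun n hn => ?_)
  subst hn
  obtain ⟨l, hl, hnl⟩ := exists_Aset_ne_zero hi hlt
  exact Nat.le_sub_one_of_lt (psi_ftil_s_lt hl hnl)

theorem fbar_mem_Xspace {x : Fin I → ℕ} (hx : x ∈ Xspace C) (e : Ev I) :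
    fbar C x e ∈ Xspace C := by
  intro p
  cases e with
  | d A =>
    refine (fbar_d_le x A p).trans ?_
    split_ifs with h
    · exact h.2
    · simpa using hx p
  | s i j => exact (fbar_s_le x i j p).trans (hx p)

def arrivalSize : Ev I → ℕ
  | .d A => A.card
  | .s _ _ => 0

theorem sum_fbar_le (x : Fin I → ℕ) (e : Ev I) :
    ∑ p, fbar C x e p ≤ ∑ p, x p + arrivalSize e := by
  classical
  cases e with
  | d A =>
    calc ∑ p, fbar C x (.d A) p ≤ ∑ p, (x p + if p ∈ A then 1 else 0) :=
          sum_le_sum fun p _ => (fbar_d_le x A p).trans (by gcongr; split_ifs <;> simp_all)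
      _ = ∑ p, x p + A.card := by
          rw [sum_add_distrib, sum_boole, filter_mem_eq_inter, univ_inter]; rfl
  | s i j => exact (sum_le_sum fun p _ => fbar_s_le x i j p).trans (Nat.le_add_right _ _)

theorem sum_fbar_s_lt {x : Fin I → ℕ} {i : Fin I} (hi : x i ≠ 0) (hlt : ∀ t < i, x t = 0) :
    ∑ p, fbar C x (.s i 1) p < ∑ p, x p :=
  sum_lt_sum (fun p _ => fbar_s_le x i 1 p) ⟨i, mem_univ i, fbar_s_lt hi hlt⟩

end Chain

section Drift

variable {I : ℕ} {C : Fin I → ℕ} {lam : Finset (Fin I) → ℝ} {μv Λ : ℝ} {lamI : Fin I → ℝ}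

theorem sum_mul_card_eq_sum (hlamI : ∀ i, lamI i = ∑ A ∈ univ.filter (fun A => i ∈ A), lam A) :
    ∑ A, lam A * A.card = ∑ i, lamI i := by
  simp only [hlamI, sum_filter]
  rw [sum_comm]
  refine sum_congr rfl fun A _ => ?_
  rw [sum_ite_mem, univ_inter, sum_const, nsmul_eq_mul, mul_comm]

theorem pos_of_tsum_probJ_eq_one (hlamnn : ∀ A, 0 ≤ lam A) (hμv : 0 < μv)
    (hν : ∑' e, probJ C lam μv Λ e = 1) : 0 < Λ := by
  by_contra! hΛ
  have hzero : ∀ e, probJ C lam μv Λ e = 0 := by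
    rintro (A | ⟨i, j⟩) <;> simp [probJ, div_nonpos_of_nonneg_of_nonpos, hlamnn, hμv.le, hΛ]
  simp [hzero] at hν

theorem tsum_probJ_mul_arrivalSize_le (hlamnn : ∀ A, 0 ≤ lam A) (hΛ : 0 < Λ)
    (hlamI : ∀ i, lamI i = ∑ A ∈ univ.filter (fun A => i ∈ A), lam A) :
    ∑' e, probJ C lam μv Λ e * arrivalSize e ≤ ENNReal.ofReal ((∑ i, lamI i) / Λ) := by
  have hsupp : (fun e => probJ C lam μv Λ e * arrivalSize e).support ⊆ Set.range Ev.d := by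
    rintro (_ | ⟨i, j⟩) h
    · exact ⟨_, rfl⟩
    · simp [arrivalSize] at h
  have hinj : Function.Injective (@Ev.d I) := fun _ _ h => Ev.d.inj h
  rw [← hinj.tsum_eq hsupp, tsum_fintype, ← sum_mul_card_eq_sum hlamI, sum_div,
    ENNReal.ofReal_sum_of_nonneg fun A _ =>
      div_nonneg (mul_nonneg (hlamnn A) A.card.cast_nonneg) hΛ.le]
  refine sum_le_sum fun A _ => ?_
  rw [mul_div_right_comm, ENNReal.ofReal_mul (div_nonneg (hlamnn A) hΛ.le),
    ENNReal.ofReal_natCast]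
  simp only [probJ, arrivalSize]
  split_ifs <;> simp

theorem tsum_probJ_mul_sum_fbar_add_le (hlamnn : ∀ A, 0 ≤ lam A) (hΛ : 0 < Λ)
    (hlamI : ∀ i, lamI i = ∑ A ∈ univ.filter (fun A => i ∈ A), lam A)
    (hs : ∑ i, lamI i ≤ μv) (hν : ∑' e, probJ C lam μv Λ e = 1)
    {x : Fin I → ℕ} (hxC : x ∈ Xspace C) (hx : x ≠ 0) :
    ∑' e, probJ C lam μv Λ e * ((∑ p, fbar C x e p : ℕ) : ℝ≥0∞)
        + ENNReal.ofReal ((μv - ∑ i, lamI i) / Λ) ≤ ((∑ p, x p : ℕ) : ℝ≥0∞) := by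
  classical
  set ν := probJ C lam μv Λ
  obtain ⟨i, hi, hlt⟩ := exists_ne_zero_forall_lt_eq_zero hx
  have hνi : ν (.s i 1) = ENNReal.ofReal (μv / Λ) := by
    simp [ν, probJ, (Nat.one_le_iff_ne_zero.2 hi).trans (hxC i)]
  have hlamI_nonneg : 0 ≤ ∑ i, lamI i :=
    sum_nonneg fun i _ => hlamI i ▸ sum_nonneg fun A _ => hlamnn A
  have hsplit : ENNReal.ofReal (μv / Λ) = ENNReal.ofReal ((μv - ∑ i, lamI i) / Λ)
      + ENNReal.ofReal ((∑ i, lamI i) / Λ) := by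
    rw [← ENNReal.ofReal_add (div_nonneg (sub_nonneg.2 hs) hΛ.le)
      (div_nonneg hlamI_nonneg hΛ.le), ← add_div, sub_add_cancel]
  have hstep : ∀ e, (∑ p, fbar C x e p) + (if e = .s i 1 then 1 else 0)
      ≤ ∑ p, x p + arrivalSize e := by
    intro e
    split_ifs with he
    · subst he; exact sum_fbar_s_lt hi hlt
    · exact sum_fbar_le x e
  refine (ENNReal.add_le_add_iff_right (ENNReal.ofReal_ne_top
    (r := (∑ i, lamI i) / Λ))).1 ?_
  calc _ = ∑' e, ν e * ((∑ p, fbar C x e p + if e = .s i 1 then 1 else 0 : ℕ) : ℝ≥0∞) := by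
        simp only [Nat.cast_add, mul_add, Nat.cast_ite, Nat.cast_one, Nat.cast_zero, mul_ite,
          mul_one, mul_zero, ENNReal.tsum_add, tsum_ite_eq, add_assoc, ← hsplit, hνi]
    _ ≤ ∑' e, (ν e * ((∑ p, x p : ℕ) : ℝ≥0∞) + ν e * arrivalSize e) :=
        ENNReal.tsum_le_tsum fun e => by rw [← mul_add]; gcongr; exact_mod_cast hstep e
    _ ≤ _ := by
        rw [ENNReal.tsum_add, ENNReal.tsum_mul_right, hν, one_mul]
        exact add_le_add_right (tsum_probJ_mul_arrivalSize_le hlamnn hΛ hlamI) _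

end Drift

theorem stmt18_general (I : ℕ) (C : Fin I → ℕ)
    (lam : Finset (Fin I) → ℝ) (hlamnn : ∀ A, 0 ≤ lam A)
    (μv : ℝ)
    (Λ : ℝ)
    (lamI : Fin I → ℝ)
    (hlamI : ∀ i, lamI i = ∑ A ∈ Finset.univ.filter (fun A => i ∈ A), lam A)
    (P : Measure (ℕ → Ev I))
    (hiid : ∀ (T : Finset ℕ) (u : ℕ → Ev I),
        P {ω | ∀ t ∈ T, ω t = u t} = ∏ t ∈ T, probJ C lam μv Λ (u t))
    (hs : ∑ i, lamI i < μv) :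
    ∫⁻ ω, sInf {r : ℝ≥0∞ | ∃ t : ℕ, r = t ∧ iter (fbar C) C (fword ω t) = 0} ∂P
      ≤ ENNReal.ofReal (Λ * (∑ i, (C i : ℝ)) / (μv - ∑ i, lamI i)) := by
  have hP : IsIIDLaw P (probJ C lam μv Λ) := hiid
  have hν := hP.tsum_eq_one
  have hlamI_nonneg : 0 ≤ ∑ i, lamI i :=
    sum_nonneg fun i _ => hlamI i ▸ sum_nonneg fun A _ => hlamnn A
  have hΛ : 0 < Λ := pos_of_tsum_probJ_eq_one hlamnn (hlamI_nonneg.trans_lt hs) hν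
  have hδ : 0 < (μv - ∑ i, lamI i) / Λ := div_pos (sub_pos.2 hs) hΛ
  have hdrift := mul_lintegral_hittingTime_le hP (f := fbar C) (K := Xspace C) (S := {0})
    (x₀ := C) (V := fun x => ((∑ p, x p : ℕ) : ℝ≥0∞)) (fun _ hx e => fbar_mem_Xspace hx e)
    (fun _ => le_rfl)
    (fun _ hx hx0 => tsum_probJ_mul_sum_fbar_add_le hlamnn hΛ hlamI hs.le hν hx hx0)
  simp only [Set.mem_singleton_iff] at hdrift
  simp only [iter_eq_foldl]
  calc _ ≤ ((∑ p, C p : ℕ) : ℝ≥0∞) / ENNReal.ofReal ((μv - ∑ i, lamI i) / Λ) := by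
        rw [ENNReal.le_div_iff_mul_le (.inl (ENNReal.ofReal_pos.2 hδ).ne')
          (.inl ENNReal.ofReal_ne_top), mul_comm]
        exact hdrift
    _ = _ := by
        rw [← ENNReal.ofReal_natCast, ← ENNReal.ofReal_div_of_pos hδ]
        congr 1
        push_cast
        field_simp

/-- Lemma C.1: hitting time to zero of the supremum chain started from the full state. -/
theorem stmt18 (I : ℕ) (hI : 1 ≤ I) (C : Fin I → ℕ) (hC : ∀ i, 1 ≤ C i)
    (lam : Finset (Fin I) → ℝ) (hlamnn : ∀ A, 0 ≤ lam A) (hlam0 : lam ∅ = 0)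
    (μv : ℝ) (hμv : 0 < μv)
    (Λ : ℝ) (hΛ : Λ = (∑ A : Finset (Fin I), lam A) + μv * ∑ i, (C i : ℝ))
    (lamI : Fin I → ℝ)
    (hlamI : ∀ i, lamI i = ∑ A ∈ Finset.univ.filter (fun A => i ∈ A), lam A)
    (P : Measure (ℕ → Ev I)) [IsProbabilityMeasure P]
    (hiid : ∀ (T : Finset ℕ) (u : ℕ → Ev I),
        P {ω | ∀ t ∈ T, ω t = u t} = ∏ t ∈ T, probJ C lam μv Λ (u t))
    (hs : ∑ i, lamI i < μv) :
    ∫⁻ ω, sInf {r : ℝ≥0∞ | ∃ t : ℕ, r = t ∧ iter (fbar C) C (fword ω t) = 0} ∂P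
      ≤ ENNReal.ofReal (Λ * (∑ i, (C i : ℝ)) / (μv - ∑ i, lamI i)) :=
  stmt18_general I C lam hlamnn μv Λ lamI hlamI P hiid hs

end ATO
end
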